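/- arXiv:2512.03412 — 4 statements merged into one kernel-verified Lean document; each statement's English description precedes it below -/
import Mathlib

section
/- Let p be a prime, r ≥ 1 an integer, and a, b, x ∈ ℤ. Define f(x,a,b) = Σ_{u,v ∈ ℤ/p^rℤ} exp(2πi(xuv + av + bu)/p^r). Then: (1) if p^r ∣ x, one has f(x,a,b) = p^{2r} when p^r ∣ a and p^r ∣ b, and f(x,a,b) = 0 otherwise; (2) if j := v_p(x) < r, then f(x,a,b) = 0 unless p^j ∣ a and p^j ∣ b, and in that case, writing x = p^j x₀ (with p ∤ x₀), a = p^j a′, b = p^j b′, one has f(x,a,b) = p^{r+j} · exp(−2πi a′b′ x₀* / p^{r−j}), where x₀* is any integer inverse of x₀ modulo p^{r−j}. -/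
open scoped BigOperators

/-- `exp(2πi c / n)` for `c ∈ ℤ/nℤ`, evaluated at the canonical representative. -/
noncomputable def eZMod (n : ℕ) (c : ZMod n) : ℂ :=
  Complex.exp (2 * Real.pi * Complex.I * (c.val : ℂ) / (n : ℂ))

lemma eZMod_intCast (n : ℕ) [NeZero n] (m : ℤ) :
    eZMod n (m : ZMod n) = Complex.exp (2 * Real.pi * Complex.I * (m : ℂ) / (n : ℂ)) := by
  set c : ZMod n := (m : ZMod n) with hc
  have h1 : ((c.val : ℕ) : ZMod n) = c := ZMod.natCast_rightInverse c
  have h2 : (n : ℤ) ∣ ((c.val : ℤ) - m) := by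
    rw [← ZMod.intCast_zmod_eq_zero_iff_dvd]
    push_cast
    rw [h1, hc, sub_self]
  obtain ⟨k, hk⟩ := h2
  have hm : (m : ℂ) = (c.val : ℂ) - (n : ℂ) * (k : ℂ) := by
    have : m = (c.val : ℤ) - n * k := by omega
    rw [this]; push_cast; ring
  have hn : (n : ℂ) ≠ 0 := Nat.cast_ne_zero.mpr (NeZero.ne n)
  rw [eZMod, hm]
  rw [show 2 * Real.pi * Complex.I * ((c.val : ℂ) - (n : ℂ) * (k : ℂ)) / (n : ℂ)
      = 2 * Real.pi * Complex.I * (c.val : ℂ) / (n : ℂ) + (-k : ℤ) * (2 * Real.pi * Complex.I) by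
    field_simp; push_cast; ring]
  rw [Complex.exp_add, Complex.exp_int_mul_two_pi_mul_I, mul_one]

lemma eZMod_add (n : ℕ) [NeZero n] (c d : ZMod n) :
    eZMod n (c + d) = eZMod n c * eZMod n d := by
  have h1 : ((c.val : ℕ) : ZMod n) = c := ZMod.natCast_rightInverse c
  have h2 : ((d.val : ℕ) : ZMod n) = d := ZMod.natCast_rightInverse d
  have h3 : c + d = (((c.val : ℤ) + (d.val : ℤ) : ℤ) : ZMod n) := by push_cast [h1, h2]; ring
  rw [h3, eZMod_intCast]
  unfold eZMod
  rw [← Complex.exp_add]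
  congr 1
  push_cast
  ring

lemma eZMod_zero (n : ℕ) [NeZero n] : eZMod n 0 = 1 := by
  simp [eZMod]

lemma eZMod_ne_one (n : ℕ) [NeZero n] {c : ZMod n} (hc : c ≠ 0) : eZMod n c ≠ 1 := by
  intro h
  unfold eZMod at h
  rw [Complex.exp_eq_one_iff] at h
  obtain ⟨k, hk⟩ := h
  have hn : (n : ℂ) ≠ 0 := Nat.cast_ne_zero.mpr (NeZero.ne n)
  have h2 : 2 * Real.pi * Complex.I * (c.val : ℂ) = 2 * Real.pi * Complex.I * ((k : ℂ) * (n : ℂ)) := by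
    rw [div_eq_iff hn] at hk
    linear_combination hk
  have h3 : (c.val : ℂ) = (k : ℂ) * (n : ℂ) :=
    mul_left_cancel₀ Complex.two_pi_I_ne_zero h2
  have h4 : (c.val : ℤ) = k * n := by exact_mod_cast h3
  have h5 : n ∣ c.val := by
    have : (n : ℤ) ∣ (c.val : ℤ) := ⟨k, by rw [h4]; ring⟩
    exact_mod_cast this
  have h6 : c.val = 0 := Nat.eq_zero_of_dvd_of_lt h5 (ZMod.val_lt c)
  exact hc ((ZMod.val_eq_zero c).mp h6)

lemma dvd_val_intCast_sub (n : ℕ) [NeZero n] (c : ℤ) :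
    (n : ℤ) ∣ (((c : ZMod n).val : ℤ) - c) := by
  rw [← ZMod.intCast_zmod_eq_zero_iff_dvd]
  push_cast [ZMod.natCast_rightInverse (c : ZMod n)]
  ring

lemma eZMod_sum (n : ℕ) [NeZero n] (t : ZMod n) :
    ∑ v : ZMod n, eZMod n (t * v) = if t = 0 then (n : ℂ) else 0 := by
  split_ifs with h
  · subst h
    simp [eZMod_zero, Finset.card_univ]
  · have h1 : eZMod n t ≠ 1 := eZMod_ne_one n h
    have key : eZMod n t * ∑ v : ZMod n, eZMod n (t * v) = ∑ v : ZMod n, eZMod n (t * v) := by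
      rw [Finset.mul_sum]
      have h2 : ∀ v : ZMod n, eZMod n t * eZMod n (t * v) = eZMod n (t * (v + 1)) := by
        intro v
        rw [← eZMod_add]
        congr 1
        ring
      simp_rw [h2]
      exact Fintype.sum_bijective (· + 1) (Equiv.addRight (1 : ZMod n)).bijective _ _
        (fun v => rfl)
    have h3 : (eZMod n t - 1) * ∑ v : ZMod n, eZMod n (t * v) = 0 := by
      rw [sub_mul, one_mul, key, sub_self]
    rcases mul_eq_zero.mp h3 with h4 | h4
    · exact absurd (sub_eq_zero.mp h4) h1
    · exact h4

/-- Lemma on the exponential sum `f(x,a,b) = Σ_{u,v mod p^r} e((xuv+av+bu)/p^r)`. -/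
theorem exp_sum_eval (p : ℕ) (hp : p.Prime) [NeZero p] (r : ℕ) (hr : 1 ≤ r) (x a b : ℤ)
    (f : ℂ)
    (hf : f = ∑ uv : ZMod (p ^ r) × ZMod (p ^ r),
      eZMod (p ^ r) ((x : ZMod (p ^ r)) * uv.1 * uv.2 + (a : ZMod (p ^ r)) * uv.2
        + (b : ZMod (p ^ r)) * uv.1)) :
    ((p : ℤ) ^ r ∣ x →
      ((((p : ℤ) ^ r ∣ a ∧ (p : ℤ) ^ r ∣ b) → f = (p : ℂ) ^ (2 * r)) ∧
        (¬ ((p : ℤ) ^ r ∣ a ∧ (p : ℤ) ^ r ∣ b) → f = 0))) ∧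
    (x ≠ 0 → padicValInt p x < r →
      ((¬ ((p : ℤ) ^ padicValInt p x ∣ a ∧ (p : ℤ) ^ padicValInt p x ∣ b) → f = 0) ∧
        (∀ x₀ a' b' xinv : ℤ,
          x = (p : ℤ) ^ padicValInt p x * x₀ →
          a = (p : ℤ) ^ padicValInt p x * a' →
          b = (p : ℤ) ^ padicValInt p x * b' →
          Int.ModEq ((p : ℤ) ^ (r - padicValInt p x)) (x₀ * xinv) 1 →
          f = (p : ℂ) ^ (r + padicValInt p x) *
            Complex.exp (-(2 * Real.pi * Complex.I) * ((a' : ℂ) * (b' : ℂ) * (xinv : ℂ)) /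
              (p : ℂ) ^ (r - padicValInt p x))))) := by
  haveI : NeZero (p ^ r) := ⟨pow_ne_zero r (NeZero.ne p)⟩
  haveI : Fact p.Prime := ⟨hp⟩
  have hnz : ((p : ℤ) ^ r : ℤ) = ((p ^ r : ℕ) : ℤ) := by push_cast; ring
  -- reduction summing over v first
  have hf1 : f = ∑ u : ZMod (p ^ r),
      (if (x : ZMod (p ^ r)) * u + (a : ZMod (p ^ r)) = 0
        then ((p ^ r : ℕ) : ℂ) * eZMod (p ^ r) ((b : ZMod (p ^ r)) * u) else 0) := by
    rw [hf, Fintype.sum_prod_type]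
    refine Finset.sum_congr rfl fun u _ => ?_
    have h1 : ∀ v : ZMod (p ^ r),
        (x : ZMod (p ^ r)) * u * v + (a : ZMod (p ^ r)) * v + (b : ZMod (p ^ r)) * u
          = ((x : ZMod (p ^ r)) * u + (a : ZMod (p ^ r))) * v + (b : ZMod (p ^ r)) * u :=
      fun v => by ring
    simp_rw [h1, eZMod_add, ← Finset.sum_mul, eZMod_sum, ite_mul, zero_mul]
  -- reduction summing over u first
  have hf2 : f = ∑ v : ZMod (p ^ r),
      (if (x : ZMod (p ^ r)) * v + (b : ZMod (p ^ r)) = 0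
        then ((p ^ r : ℕ) : ℂ) * eZMod (p ^ r) ((a : ZMod (p ^ r)) * v) else 0) := by
    rw [hf, Fintype.sum_prod_type_right]
    refine Finset.sum_congr rfl fun v _ => ?_
    have h1 : ∀ u : ZMod (p ^ r),
        (x : ZMod (p ^ r)) * u * v + (a : ZMod (p ^ r)) * v + (b : ZMod (p ^ r)) * u
          = ((x : ZMod (p ^ r)) * v + (b : ZMod (p ^ r))) * u + (a : ZMod (p ^ r)) * v :=
      fun u => by ring
    simp_rw [h1, eZMod_add, ← Finset.sum_mul, eZMod_sum, ite_mul, zero_mul]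
  constructor
  · -- Case 1 : p^r ∣ x
    intro hx
    have hx0 : (x : ZMod (p ^ r)) = 0 := by
      rw [ZMod.intCast_zmod_eq_zero_iff_dvd, ← hnz]; exact hx
    constructor
    · rintro ⟨ha, hb⟩
      have ha0 : (a : ZMod (p ^ r)) = 0 := by
        rw [ZMod.intCast_zmod_eq_zero_iff_dvd, ← hnz]; exact ha
      have hb0 : (b : ZMod (p ^ r)) = 0 := by
        rw [ZMod.intCast_zmod_eq_zero_iff_dvd, ← hnz]; exact hb
      rw [hf1]
      simp only [hx0, ha0, hb0, zero_mul, zero_add, if_true, eq_self_iff_true, eZMod_zero, mul_one]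
      rw [Finset.sum_const, Finset.card_univ, ZMod.card, nsmul_eq_mul]
      push_cast
      rw [two_mul, pow_add]
    · intro hnab
      by_cases ha : (p : ℤ) ^ r ∣ a
      · have hb : ¬ (p : ℤ) ^ r ∣ b := fun hb => hnab ⟨ha, hb⟩
        have ha0 : (a : ZMod (p ^ r)) = 0 := by
          rw [ZMod.intCast_zmod_eq_zero_iff_dvd, ← hnz]; exact ha
        have hb0 : (b : ZMod (p ^ r)) ≠ 0 := by
          rw [Ne, ZMod.intCast_zmod_eq_zero_iff_dvd, ← hnz]; exact hb
        rw [hf1]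
        simp only [hx0, ha0, zero_mul, zero_add, if_true, eq_self_iff_true, ← Finset.mul_sum]
        rw [eZMod_sum, if_neg hb0, mul_zero]
      · have ha0 : (a : ZMod (p ^ r)) ≠ 0 := by
          rw [Ne, ZMod.intCast_zmod_eq_zero_iff_dvd, ← hnz]; exact ha
        rw [hf1]
        refine Finset.sum_eq_zero fun u _ => ?_
        rw [if_neg]
        rw [hx0, zero_mul, zero_add]
        exact ha0
  · -- Case 2 : j = v_p(x) < r
    intro hxne hj
    set j := padicValInt p x with hjdef
    have hpj : (p : ℤ) ^ j ∣ x := padicValInt_dvd x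
    set m := r - j with hmdef
    have hjm : j + m = r := by omega
    have hpne : ((p : ℤ)) ≠ 0 := by exact_mod_cast hp.pos.ne'
    have hpjne : ((p : ℤ) ^ j) ≠ 0 := pow_ne_zero _ hpne
    have hpmne : ((p : ℤ) ^ m) ≠ 0 := pow_ne_zero _ hpne
    have hsplit : ((p ^ r : ℕ) : ℤ) = (p : ℤ) ^ j * (p : ℤ) ^ m := by
      push_cast
      rw [← pow_add, hjm]
    have hdvdjr : (p : ℤ) ^ j ∣ ((p ^ r : ℕ) : ℤ) := ⟨(p : ℤ) ^ m, hsplit⟩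
    have hdvdmr : (p : ℤ) ^ m ∣ ((p ^ r : ℕ) : ℤ) := ⟨(p : ℤ) ^ j, by rw [hsplit]; ring⟩
    constructor
    · -- vanishing when not both divisible
      intro hnab
      by_cases ha : (p : ℤ) ^ j ∣ a
      · have hb : ¬ (p : ℤ) ^ j ∣ b := fun h => hnab ⟨ha, h⟩
        rw [hf2]
        refine Finset.sum_eq_zero fun v _ => ?_
        rw [if_neg]
        intro hc
        have hv : ((v.val : ℕ) : ZMod (p ^ r)) = v := ZMod.natCast_rightInverse v
        have h0 : ((x * (v.val : ℤ) + b : ℤ) : ZMod (p ^ r)) = 0 := by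
          push_cast [hv]
          exact hc
        rw [ZMod.intCast_zmod_eq_zero_iff_dvd] at h0
        have h1 : (p : ℤ) ^ j ∣ x * (v.val : ℤ) + b := dvd_trans hdvdjr h0
        have h2 : (p : ℤ) ^ j ∣ b := by
          have := dvd_sub h1 (hpj.mul_right (v.val : ℤ))
          simpa using this
        exact hb h2
      · rw [hf1]
        refine Finset.sum_eq_zero fun u _ => ?_
        rw [if_neg]
        intro hc
        have hu : ((u.val : ℕ) : ZMod (p ^ r)) = u := ZMod.natCast_rightInverse u
        have h0 : ((x * (u.val : ℤ) + a : ℤ) : ZMod (p ^ r)) = 0 := by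
          push_cast [hu]
          exact hc
        rw [ZMod.intCast_zmod_eq_zero_iff_dvd] at h0
        have h1 : (p : ℤ) ^ j ∣ x * (u.val : ℤ) + a := dvd_trans hdvdjr h0
        have h2 : (p : ℤ) ^ j ∣ a := by
          have := dvd_sub h1 (hpj.mul_right (u.val : ℤ))
          simpa using this
        exact ha h2
    · -- main evaluation
      intro x₀ a' b' xinv hx₀ ha' hb' hinv
      haveI : NeZero (p ^ j) := ⟨pow_ne_zero _ (NeZero.ne p)⟩
      have hZinv : (p : ℤ) ^ m ∣ (x₀ * xinv - 1) := Int.ModEq.dvd hinv.symm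
      obtain ⟨w, hw⟩ := hZinv
      have hZinv' : (p : ℤ) ^ m ∣ (x₀ * xinv - 1) := ⟨w, hw⟩
      have hcop : IsCoprime ((p : ℤ) ^ m) x₀ := ⟨-w, xinv, by linear_combination hw⟩
      set u₀ : ℤ := -(a' * xinv) with hu0
      -- solvability condition
      have hcond : ∀ u : ZMod (p ^ r),
          ((x : ZMod (p ^ r)) * u + (a : ZMod (p ^ r)) = 0 ↔
            (p : ℤ) ^ m ∣ ((u.val : ℤ) - u₀)) := by
        intro u
        have hu : ((u.val : ℕ) : ZMod (p ^ r)) = u := ZMod.natCast_rightInverse u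
        have e1 : (x : ZMod (p ^ r)) * u + (a : ZMod (p ^ r))
            = ((x * (u.val : ℤ) + a : ℤ) : ZMod (p ^ r)) := by
          push_cast [hu]
          ring
        rw [e1, ZMod.intCast_zmod_eq_zero_iff_dvd]
        have e2 : x * (u.val : ℤ) + a = (p : ℤ) ^ j * (x₀ * (u.val : ℤ) + a') := by
          rw [hx₀, ha']; ring
        rw [e2, hsplit, mul_dvd_mul_iff_left hpjne]
        constructor
        · intro h
          have h2 : (p : ℤ) ^ m ∣ x₀ * ((u.val : ℤ) - u₀) := by
            have e3 : x₀ * ((u.val : ℤ) - u₀)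
                = (x₀ * (u.val : ℤ) + a') + (x₀ * xinv - 1) * a' := by
              rw [hu0]; ring
            rw [e3]
            exact dvd_add h (hZinv'.mul_right a')
          exact hcop.dvd_of_dvd_mul_left h2
        · intro h
          have e3 : x₀ * (u.val : ℤ) + a'
              = x₀ * ((u.val : ℤ) - u₀) - (x₀ * xinv - 1) * a' := by
            rw [hu0]; ring
          rw [e3]
          exact dvd_sub (h.mul_left x₀) (hZinv'.mul_right a')
      -- the parametrization of solutions
      set ψ : ZMod (p ^ j) → ZMod (p ^ r) :=
        fun t => ((u₀ + (p : ℤ) ^ m * (t.val : ℤ) : ℤ) : ZMod (p ^ r)) with hψ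
      have hstep : f = ∑ t : ZMod (p ^ j),
          ((p ^ r : ℕ) : ℂ) * eZMod (p ^ r) ((b : ZMod (p ^ r)) * ψ t) := by
        rw [hf1, ← Finset.sum_filter]
        refine (Finset.sum_bij (fun t _ => ψ t) ?_ ?_ ?_ ?_).symm
        · -- maps into the filter
          intro t _
          rw [Finset.mem_filter]
          refine ⟨Finset.mem_univ _, ?_⟩
          rw [hcond]
          have h1 : ((p ^ r : ℕ) : ℤ) ∣ (((ψ t).val : ℤ) - (u₀ + (p : ℤ) ^ m * (t.val : ℤ))) :=
            dvd_val_intCast_sub (p ^ r) _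
          have h2 : (p : ℤ) ^ m ∣ (((ψ t).val : ℤ) - (u₀ + (p : ℤ) ^ m * (t.val : ℤ))) :=
            dvd_trans hdvdmr h1
          have h3 : (((ψ t).val : ℤ) - u₀)
              = ((((ψ t).val : ℤ) - (u₀ + (p : ℤ) ^ m * (t.val : ℤ)))
                + (p : ℤ) ^ m * (t.val : ℤ)) := by ring
          rw [h3]
          exact dvd_add h2 (Dvd.intro _ rfl)
        · -- injective
          intro t₁ _ t₂ _ hteq
          have h1 : ((p ^ r : ℕ) : ℤ) ∣
              ((u₀ + (p : ℤ) ^ m * (t₁.val : ℤ)) - (u₀ + (p : ℤ) ^ m * (t₂.val : ℤ))) := by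
            have := (ZMod.intCast_eq_intCast_iff _ _ _).mp hteq
            exact (Int.ModEq.dvd this.symm)
          rw [hsplit] at h1
          have h2 : (p : ℤ) ^ j * (p : ℤ) ^ m ∣ (p : ℤ) ^ m * ((t₁.val : ℤ) - (t₂.val : ℤ)) := by
            have e4 : (u₀ + (p : ℤ) ^ m * (t₁.val : ℤ)) - (u₀ + (p : ℤ) ^ m * (t₂.val : ℤ))
                = (p : ℤ) ^ m * ((t₁.val : ℤ) - (t₂.val : ℤ)) := by ring
            rwa [e4] at h1
          rw [mul_comm ((p : ℤ) ^ j) ((p : ℤ) ^ m), mul_dvd_mul_iff_left hpmne] at h2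
          have h3 : ((t₁.val : ℤ) : ZMod (p ^ j)) = ((t₂.val : ℤ) : ZMod (p ^ j)) := by
            rw [ZMod.intCast_eq_intCast_iff]
            exact Int.ModEq.symm (Int.modEq_iff_dvd.mpr (by push_cast; exact h2))
          have h4 : ((t₁.val : ℕ) : ZMod (p ^ j)) = ((t₂.val : ℕ) : ZMod (p ^ j)) := by
            exact_mod_cast h3
          rwa [ZMod.natCast_rightInverse t₁, ZMod.natCast_rightInverse t₂] at h4
        · -- surjective
          intro u hu
          rw [Finset.mem_filter] at hu
          obtain ⟨-, hu2⟩ := hu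
          rw [hcond] at hu2
          obtain ⟨q, hq⟩ := hu2
          refine ⟨((q : ℤ) : ZMod (p ^ j)), Finset.mem_univ _, ?_⟩
          have hval : ((u.val : ℕ) : ZMod (p ^ r)) = u := ZMod.natCast_rightInverse u
          show ((u₀ + (p : ℤ) ^ m * ((((q : ℤ) : ZMod (p ^ j)).val : ℤ)) : ℤ) : ZMod (p ^ r)) = u
          have h5 : (p : ℤ) ^ j ∣ ((((q : ℤ) : ZMod (p ^ j)).val : ℤ) - q) := by
            have := dvd_val_intCast_sub (p ^ j) q
            exact dvd_trans (by push_cast; rfl) this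
          obtain ⟨s, hs⟩ := h5
          have key : ((p ^ r : ℕ) : ℤ) ∣
              ((u₀ + (p : ℤ) ^ m * ((((q : ℤ) : ZMod (p ^ j)).val : ℤ))) - (u.val : ℤ)) := by
            rw [hsplit]
            have e5 : (u₀ + (p : ℤ) ^ m * ((((q : ℤ) : ZMod (p ^ j)).val : ℤ))) - (u.val : ℤ)
                = (p : ℤ) ^ m * (((((q : ℤ) : ZMod (p ^ j)).val : ℤ)) - q)
                  - (((u.val : ℤ) - u₀) - (p : ℤ) ^ m * q) := by ring
            rw [e5, hs, hq]
            ring_nf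
            exact ⟨s, by ring⟩
          have h6 : ((u₀ + (p : ℤ) ^ m * ((((q : ℤ) : ZMod (p ^ j)).val : ℤ)) : ℤ) : ZMod (p ^ r))
              = (((u.val : ℤ) : ℤ) : ZMod (p ^ r)) := by
            rw [ZMod.intCast_eq_intCast_iff]
            exact Int.ModEq.symm (Int.modEq_iff_dvd.mpr (by simpa using key))
          rw [h6]
          push_cast [hval]
          rfl
        · intro t _
          rfl
      -- evaluate the remaining sum
      have hterm : ∀ t : ZMod (p ^ j),
          eZMod (p ^ r) ((b : ZMod (p ^ r)) * ψ t)
            = Complex.exp (-(2 * Real.pi * Complex.I) * ((a' : ℂ) * (b' : ℂ) * (xinv : ℂ)) /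
                (p : ℂ) ^ m) := by
        intro t
        have e6 : (b : ZMod (p ^ r)) * ψ t
            = ((b * (u₀ + (p : ℤ) ^ m * (t.val : ℤ)) : ℤ) : ZMod (p ^ r)) := by
          rw [hψ]
          push_cast
          ring
        rw [e6, eZMod_intCast]
        have e7 : (b * (u₀ + (p : ℤ) ^ m * (t.val : ℤ)) : ℤ)
            = (p : ℤ) ^ j * b' * (-(a' * xinv)) + ((p : ℤ) ^ j * (p : ℤ) ^ m) * (b' * (t.val : ℤ)) := by
          rw [hb', hu0]; ring
        have hPr : ((p ^ r : ℕ) : ℂ) = (p : ℂ) ^ j * (p : ℂ) ^ m := by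
          push_cast
          rw [← pow_add, hjm]
        have hpmC : ((p : ℂ)) ≠ 0 := Nat.cast_ne_zero.mpr (NeZero.ne p)
        have hargs : 2 * Real.pi * Complex.I * ((b * (u₀ + (p : ℤ) ^ m * (t.val : ℤ)) : ℤ) : ℂ) /
              ((p ^ r : ℕ) : ℂ)
            = -(2 * Real.pi * Complex.I) * ((a' : ℂ) * (b' : ℂ) * (xinv : ℂ)) / (p : ℂ) ^ m
              + ((b' * (t.val : ℤ) : ℤ) : ℂ) * (2 * Real.pi * Complex.I) := by
          rw [e7, hPr]
          push_cast
          field_simp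
        rw [hargs, Complex.exp_add, Complex.exp_int_mul_two_pi_mul_I, mul_one]
      rw [hstep]
      simp_rw [hterm]
      rw [Finset.sum_const, Finset.card_univ, ZMod.card, nsmul_eq_mul]
      rw [show r + j = j + r by ring, pow_add]
      push_cast
      ring
end

section
/- Let η ∈ ℤ^{2m} and let r ≥ 1 be an integer such that p^r divides every coordinate of η. Then B_r(η) = p^{2rm−r} + Σ_{j=0}^{r−1} (p^{rm+jm−j} − p^{rm+jm−j−1}). -/
open scoped BigOperators

/-- The exponential sum `B_r(η)` for `η = (a₁,…,a_m,b₁,…,b_m)`, summing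
`e((Σ aᵢvᵢ + Σ bᵢuᵢ)/p^r)` over `u, v ∈ (ℤ/p^rℤ)^m` with `Σ uᵢvᵢ ≡ 0 (mod p^r)`. -/
noncomputable def Bsum (p : ℕ) [NeZero p] (m r : ℕ) (a b : Fin m → ℤ) : ℂ :=
  ∑ uv : (Fin m → ZMod (p ^ r)) × (Fin m → ZMod (p ^ r)),
    if (∑ i, uv.1 i * uv.2 i) = 0 then
      eZMod (p ^ r) (∑ i, ((a i : ZMod (p ^ r)) * uv.2 i + (b i : ZMod (p ^ r)) * uv.1 i))
    else 0



lemma card_fiber_mul {A B : Type*} [AddCommGroup A] [AddCommGroup B]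
    (f : A →+ B) (hf : Function.Surjective f) (c : B) :
    Nat.card {a // f a = c} * Nat.card B = Nat.card A := by
  obtain ⟨a0, ha0⟩ := hf c
  have e1 : {a // f a = c} ≃ {a // f a = 0} :=
    { toFun := fun a => ⟨a.1 - a0, by simp [a.2, ha0]⟩
      invFun := fun a => ⟨a.1 + a0, by simp [a.2, ha0]⟩
      left_inv := fun a => by simp
      right_inv := fun a => by simp }
  have e2 : {a // f a = 0} ≃ f.ker := Equiv.refl _
  have e3 : A ≃ (A ⧸ f.ker) × f.ker := AddSubgroup.addGroupEquivQuotientProdAddSubgroup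
  have e4 : (A ⧸ f.ker) ≃ B := (QuotientAddGroup.quotientKerEquivOfSurjective f hf).toEquiv
  rw [Nat.card_congr e1, Nat.card_congr e2, Nat.card_congr e3, Nat.card_prod,
    Nat.card_congr e4, Nat.mul_comm]

/-- Finset version. -/
lemma card_fiber_filter_mul {A B : Type*} [AddCommGroup A] [AddCommGroup B]
    [Fintype A] [DecidableEq B]
    (f : A →+ B) (hf : Function.Surjective f) (c : B) :
    (Finset.univ.filter (fun a => f a = c)).card * Nat.card B = Fintype.card A := by
  have := card_fiber_mul f hf c
  rwa [Nat.card_eq_fintype_card (α := {a // f a = c}), Fintype.card_subtype,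
    Nat.card_eq_fintype_card (α := A)] at this

def dotHom (q m : ℕ) (u : Fin m → ZMod q) : (Fin m → ZMod q) →+ ZMod q where
  toFun v := ∑ i, u i * v i
  map_zero' := by simp
  map_add' v w := by simp [mul_add, Finset.sum_add_distrib]

lemma dotHom_surjective (q m : ℕ) (u : Fin m → ZMod q) (i₀ : Fin m) (hu : IsUnit (u i₀)) :
    Function.Surjective (dotHom q m u) := by
  intro c
  obtain ⟨w, hw⟩ := hu.exists_right_inv
  refine ⟨fun j => if j = i₀ then w * c else 0, ?_⟩
  simp only [dotHom, AddMonoidHom.coe_mk, ZeroHom.coe_mk, mul_ite, mul_zero]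
  rw [Finset.sum_ite_eq' Finset.univ i₀ (fun i => u i * (w * c))]
  simp [← mul_assoc, hw]

lemma card_dot_fiber (q m : ℕ) [NeZero q] (u : Fin m → ZMod q) (i₀ : Fin m)
    (hu : IsUnit (u i₀)) :
    (Finset.univ.filter (fun v : Fin m → ZMod q => ∑ i, u i * v i = 0)).card * q = q ^ m := by
  have := card_fiber_filter_mul (dotHom q m u) (dotHom_surjective q m u i₀ hu) 0
  simp [dotHom, Nat.card_eq_fintype_card, ZMod.card] at this
  convert this using 3
  exact Finset.filter_congr (fun x _ => Iff.rfl)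

variable (p s : ℕ)

lemma ppow_eq_zero : ((p : ZMod (p^(s+1))))^(s+1) = 0 := by
  have : (((p^(s+1) : ℕ)) : ZMod (p^(s+1))) = 0 := ZMod.natCast_self _
  push_cast at this
  exact this

/-- multiplication-by-p embedding `ZMod p^s →+ ZMod p^(s+1)` -/
noncomputable def psi : ZMod (p^s) →+ ZMod (p^(s+1)) :=
  ZMod.lift (p^s) ⟨(AddMonoidHom.mulRight ((p : ZMod (p^(s+1))))).comp (Int.castAddHom _),
    by simp only [AddMonoidHom.comp_apply, Int.coe_castAddHom, AddMonoidHom.mulRight_apply]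
       push_cast
       rw [← pow_succ, ppow_eq_zero]⟩

lemma psi_apply_intCast (k : ℤ) : psi p s (k : ZMod (p^s)) = (k : ZMod (p^(s+1))) * p := by
  simp [psi]

lemma psi_apply_natCast (k : ℕ) : psi p s (k : ZMod (p^s)) = (k : ZMod (p^(s+1))) * p := by
  have := psi_apply_intCast p s (k : ℤ)
  push_cast at this
  exact this

variable [hp : Fact p.Prime]

lemma val_natCast_mul_p (k : ℕ) :
    ((k : ZMod (p^(s+1))) * p) = ((k * p : ℕ) : ZMod (p^(s+1))) := by push_cast; ring

lemma psi_injective : Function.Injective (psi p s) := by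
  rw [injective_iff_map_eq_zero]
  intro y hy
  have hval : y = ((y.val : ℕ) : ZMod (p^s)) := by
    rw [ZMod.natCast_val, ZMod.cast_id]
  rw [hval, psi_apply_natCast, val_natCast_mul_p,
    ZMod.natCast_eq_zero_iff, pow_succ,
    Nat.mul_dvd_mul_iff_right (Nat.pos_of_ne_zero hp.out.ne_zero)] at hy
  rw [hval, ZMod.natCast_eq_zero_iff]
  exact hy

lemma pi_apply (x : ZMod (p^(s+1))) :
    ZMod.castHom (dvd_pow_self p (Nat.succ_ne_zero s)) (ZMod p) x = ((x.val : ℕ) : ZMod p) := by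
  rw [ZMod.castHom_apply, ← ZMod.natCast_val]

lemma pi_eq_zero_iff (x : ZMod (p^(s+1))) :
    ZMod.castHom (dvd_pow_self p (Nat.succ_ne_zero s)) (ZMod p) x = 0 ↔ p ∣ x.val := by
  rw [pi_apply, ZMod.natCast_eq_zero_iff]

lemma mem_range_psi (x : ZMod (p^(s+1)))
    (hx : ZMod.castHom (dvd_pow_self p (Nat.succ_ne_zero s)) (ZMod p) x = 0) :
    ∃ y, psi p s y = x := by
  rw [pi_eq_zero_iff] at hx
  refine ⟨((x.val / p : ℕ) : ZMod (p^s)), ?_⟩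
  rw [psi_apply_natCast, val_natCast_mul_p, Nat.div_mul_cancel hx,
    ZMod.natCast_val, ZMod.cast_id]

lemma pi_psi (y : ZMod (p^s)) :
    ZMod.castHom (dvd_pow_self p (Nat.succ_ne_zero s)) (ZMod p) (psi p s y) = 0 := by
  have hval : y = ((y.val : ℕ) : ZMod (p^s)) := by rw [ZMod.natCast_val, ZMod.cast_id]
  rw [hval, psi_apply_natCast, map_mul]
  have h0 : (ZMod.castHom (dvd_pow_self p (Nat.succ_ne_zero s)) (ZMod p)) (p : ZMod (p^(s+1))) = 0 := by
    rw [map_natCast, ZMod.natCast_self]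
  rw [h0, mul_zero]

lemma psi_mul (y : ZMod (p^s)) (x : ZMod (p^(s+1))) :
    psi p s (y * ZMod.castHom (pow_dvd_pow p (Nat.le_succ s)) (ZMod (p^s)) x) =
      psi p s y * x := by
  have hy : y = ((y.val : ℕ) : ZMod (p^s)) := by rw [ZMod.natCast_val, ZMod.cast_id]
  have hx : x = ((x.val : ℕ) : ZMod (p^(s+1))) := by rw [ZMod.natCast_val, ZMod.cast_id]
  rw [hy, hx, map_natCast, ← Nat.cast_mul, psi_apply_natCast, psi_apply_natCast]
  push_cast
  ring

lemma isUnit_of_pi_ne_zero (x : ZMod (p^(s+1)))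
    (hx : ZMod.castHom (dvd_pow_self p (Nat.succ_ne_zero s)) (ZMod p) x ≠ 0) :
    IsUnit x := by
  rw [Ne, pi_eq_zero_iff] at hx
  have hxv : x = ((x.val : ℕ) : ZMod (p^(s+1))) := by rw [ZMod.natCast_val, ZMod.cast_id]
  rw [hxv, ZMod.isUnit_iff_coprime]
  exact Nat.Coprime.pow_right _ ((Nat.Prime.coprime_iff_not_dvd hp.out).2 hx).symm

section count
variable (p s : ℕ) [hp : Fact p.Prime]

lemma card_cast_fiber (c : ZMod (p^s)) :
    (Finset.univ.filter (fun x : ZMod (p^(s+1)) =>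
      ZMod.castHom (pow_dvd_pow p (Nat.le_succ s)) (ZMod (p^s)) x = c)).card * p^s = p^(s+1) := by
  haveI : NeZero p := ⟨hp.out.ne_zero⟩
  have hsurj : Function.Surjective
      (ZMod.castHom (pow_dvd_pow p (Nat.le_succ s)) (ZMod (p^s))) := by
    intro c
    exact ⟨(c.val : ZMod (p^(s+1))), by rw [map_natCast, ZMod.natCast_val, ZMod.cast_id]⟩
  have := card_fiber_filter_mul
    (ZMod.castHom (pow_dvd_pow p (Nat.le_succ s)) (ZMod (p^s))).toAddMonoidHom hsurj c
  simpa [Nat.card_eq_fintype_card, ZMod.card] using this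

lemma card_pi_fiber (m : ℕ) :
    (Finset.univ.filter (fun x : ZMod (p^(s+1)) =>
      ZMod.castHom (dvd_pow_self p (Nat.succ_ne_zero s)) (ZMod p) x = 0)).card * p = p^(s+1) := by
  haveI : NeZero p := ⟨hp.out.ne_zero⟩
  have hsurj : Function.Surjective
      (ZMod.castHom (dvd_pow_self p (Nat.succ_ne_zero s)) (ZMod p)) := by
    intro c
    exact ⟨(c.val : ZMod (p^(s+1))), by rw [map_natCast, ZMod.natCast_val, ZMod.cast_id]⟩
  have := card_fiber_filter_mul
    (ZMod.castHom (dvd_pow_self p (Nat.succ_ne_zero s)) (ZMod p)).toAddMonoidHom hsurj 0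
  simpa [Nat.card_eq_fintype_card, ZMod.card] using this

end count

lemma card_filter_pi {ι α : Type*} [Fintype ι] [DecidableEq ι] [Fintype α] [DecidableEq α]
    (Q : ι → α → Prop) [∀ i x, Decidable (Q i x)] :
    (Finset.univ.filter (fun v : ι → α => ∀ i, Q i (v i))).card
      = ∏ i, (Finset.univ.filter (fun x => Q i x)).card := by
  rw [← Fintype.card_subtype]
  rw [Fintype.card_congr (Equiv.subtypePiEquivPi (p := Q))]
  rw [Fintype.card_pi]
  exact Finset.prod_congr rfl fun i _ => Fintype.card_subtype _

def Ncard (p m r : ℕ) [NeZero p] : ℕ :=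
  (Finset.univ.filter (fun uv : (Fin m → ZMod (p^r)) × (Fin m → ZMod (p^r)) =>
    ∑ i, uv.1 i * uv.2 i = 0)).card

lemma Ncard_zero (p m : ℕ) [NeZero p] : Ncard p m 0 = 1 := by
  haveI : NeZero (p^0) := ⟨by simp⟩
  haveI : Subsingleton (ZMod (p^0)) := by
    rw [← Fintype.card_le_one_iff_subsingleton, ZMod.card, pow_zero]
  have h : ∀ uv : (Fin m → ZMod (p^0)) × (Fin m → ZMod (p^0)),
      ∑ i, uv.1 i * uv.2 i = 0 := fun uv => Subsingleton.elim _ _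
  rw [Ncard, Finset.filter_true_of_mem (fun x _ => h x), Finset.card_univ]
  simp [ZMod.card]


lemma filter_inst_irrel {α : Type*} (p : α → Prop) (h1 h2 : DecidablePred p)
    (s : Finset α) : @Finset.filter α p h1 s = @Finset.filter α p h2 s := by
  have : h1 = h2 := Subsingleton.elim _ _
  subst this
  rfl

lemma card_filter_pi' {ι α β : Type*} [Fintype ι] [DecidableEq ι] [Fintype α]
    [DecidableEq α] [DecidableEq β] (f : α → β) (w : ι → β) :
    (Finset.univ.filter (fun v : ι → α => ∀ i, f (v i) = w i)).card
      = ∏ i, (Finset.univ.filter (fun x => f x = w i)).card :=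
  card_filter_pi (fun i x => f x = w i)

set_option maxHeartbeats 2000000 in
lemma Ncard_succ (p : ℕ) [hp : Fact p.Prime] (m : ℕ) (hm : 1 ≤ m) (s : ℕ) :
    Ncard p m (s+1) = (p^((s+1)*m) - p^(s*m)) * p^((s+1)*(m-1)) + p^m * Ncard p m s := by
  haveI : NeZero p := ⟨hp.out.ne_zero⟩
  have hppos : 0 < p := Nat.pos_of_ne_zero hp.out.ne_zero
  have hqpos : 0 < p^(s+1) := Nat.pow_pos hppos
  have hq'pos : 0 < p^s := Nat.pow_pos hppos
  set π := ZMod.castHom (dvd_pow_self p (Nat.succ_ne_zero s)) (ZMod p) with hπ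
  set ρ := ZMod.castHom (pow_dvd_pow p (Nat.le_succ s)) (ZMod (p^s)) with hρ
  set ψ := psi p s with hψ
  set A : Finset ((Fin m → ZMod (p^(s+1))) × (Fin m → ZMod (p^(s+1)))) :=
    Finset.univ.filter (fun uv => ∑ i, uv.1 i * uv.2 i = 0) with hAdef
  have hA : Ncard p m (s+1) = A.card := rfl
  have memA : ∀ uv : (Fin m → ZMod (p^(s+1))) × (Fin m → ZMod (p^(s+1))),
      uv ∈ A ↔ ∑ i, uv.1 i * uv.2 i = 0 := by
    intro uv; rw [hAdef, Finset.mem_filter]; simp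
  set P : (Fin m → ZMod (p^(s+1))) × (Fin m → ZMod (p^(s+1))) → Prop :=
    fun uv => ∀ i, π (uv.1 i) = 0 with hPdef
  have hsplit : (A.filter P).card + (A.filter fun uv => ¬ P uv).card = A.card :=
    Finset.card_filter_add_card_filter_not P
  have hpicard : (Finset.univ.filter (fun x : ZMod (p^(s+1)) => π x = 0)).card = p^s :=
    Nat.eq_of_mul_eq_mul_right hppos ((card_pi_fiber p s m).trans (pow_succ p s))
  have hrhocard : ∀ c : ZMod (p^s),
      (Finset.univ.filter (fun x : ZMod (p^(s+1)) => ρ x = c)).card = p := fun c =>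
    Nat.eq_of_mul_eq_mul_right hq'pos ((card_cast_fiber p s c).trans (pow_succ' p s))
  -- Part A
  have hPartA : (A.filter fun uv => ¬ P uv).card
      = (p^((s+1)*m) - p^(s*m)) * p^((s+1)*(m-1)) := by
    set U : Finset (Fin m → ZMod (p^(s+1))) :=
      Finset.univ.filter (fun u => ¬ ∀ i, π (u i) = 0) with hUdef
    have memU : ∀ u : Fin m → ZMod (p^(s+1)), u ∈ U ↔ ¬ ∀ i, π (u i) = 0 := by
      intro u; rw [hUdef, Finset.mem_filter]; simp
    have hmap : ∀ uv ∈ (A.filter fun uv => ¬ P uv), Prod.fst uv ∈ U := by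
      intro uv huv
      rw [Finset.mem_filter] at huv
      exact (memU _).2 huv.2
    rw [Finset.card_eq_sum_card_fiberwise hmap]
    have hfiber : ∀ u ∈ U, ((A.filter fun uv => ¬ P uv).filter (fun uv => uv.1 = u)).card
        = p^((s+1)*(m-1)) := by
      intro u hu
      rw [memU] at hu
      push_neg at hu
      obtain ⟨i₀, hi₀⟩ := hu
      have hunit := isUnit_of_pi_ne_zero p s (u i₀) hi₀
      have hbij : ((A.filter fun uv => ¬ P uv).filter (fun uv => uv.1 = u)).card
          = (Finset.univ.filter
              (fun v : Fin m → ZMod (p^(s+1)) => ∑ i, u i * v i = 0)).card := by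
        refine Finset.card_bij' (fun uv _ => uv.2) (fun v _ => (u, v)) ?hi ?hj ?li ?ri
        case hi =>
          intro uv h
          rw [Finset.mem_filter, Finset.mem_filter, memA] at h
          obtain ⟨⟨h1, _⟩, h3⟩ := h
          rw [Finset.mem_filter]
          refine ⟨Finset.mem_univ _, ?_⟩
          show ∑ i, u i * uv.2 i = 0
          rw [← h3]; exact h1
        case hj =>
          intro v hv
          rw [Finset.mem_filter] at hv
          rw [Finset.mem_filter, Finset.mem_filter, memA]
          exact ⟨⟨hv.2, fun hall => hi₀ (hall i₀)⟩, rfl⟩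
        case li =>
          rintro ⟨u1, v1⟩ h
          rw [Finset.mem_filter] at h
          have h3 : u1 = u := h.2
          show (u, v1) = (u1, v1)
          rw [h3]
        case ri =>
          intro v _
          rfl
      rw [hbij]
      have h := card_dot_fiber (p^(s+1)) m u i₀ hunit
      have hm' : (p^(s+1))^m = (p^(s+1))^(m-1) * p^(s+1) := by
        conv_lhs => rw [show m = (m-1)+1 from (Nat.succ_pred_eq_of_pos hm).symm]
        rw [pow_succ]
      rw [hm'] at h
      rw [Nat.eq_of_mul_eq_mul_right hqpos h, ← pow_mul]
    rw [Finset.sum_congr rfl hfiber, Finset.sum_const, smul_eq_mul]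
    congr 1
    have hPcard : (Finset.univ.filter
        (fun u : Fin m → ZMod (p^(s+1)) => ∀ i, π (u i) = 0)).card = p^(s*m) := by
      have h1 : (Finset.univ.filter
          (fun u : Fin m → ZMod (p^(s+1)) => ∀ i, π (u i) = 0)).card
          = ∏ _i : Fin m,
            (Finset.univ.filter (fun x : ZMod (p^(s+1)) => π x = 0)).card :=
        by convert card_filter_pi' (⇑π) (fun _ => (0 : ZMod p)) using 2
           all_goals first
             | exact filter_inst_irrel _ _ _ _
             | infer_instance
      rw [h1, hpicard, Finset.prod_const, Finset.card_univ, Fintype.card_fin, ← pow_mul]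
    have htot : (Finset.univ.filter
          (fun u : Fin m → ZMod (p^(s+1)) => ∀ i, π (u i) = 0)).card + U.card
        = p^((s+1)*m) := by
      rw [hUdef, Finset.card_filter_add_card_filter_not, Finset.card_univ]
      rw [Fintype.card_fun, ZMod.card, Fintype.card_fin, ← pow_mul]
    rw [← htot, hPcard, Nat.add_sub_cancel_left]
  -- Part B
  have hPartB : (A.filter P).card = p^m * Ncard p m s := by
    set A' : Finset ((Fin m → ZMod (p^s)) × (Fin m → ZMod (p^s))) :=
      Finset.univ.filter (fun uv => ∑ i, uv.1 i * uv.2 i = 0) with hA'def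
    have memA' : ∀ uv : (Fin m → ZMod (p^s)) × (Fin m → ZMod (p^s)),
        uv ∈ A' ↔ ∑ i, uv.1 i * uv.2 i = 0 := by
      intro uv; rw [hA'def, Finset.mem_filter]; simp
    set σ : ZMod (p^(s+1)) → ZMod (p^s) := Function.invFun ψ with hσdef
    set g : (Fin m → ZMod (p^(s+1))) × (Fin m → ZMod (p^(s+1)))
        → (Fin m → ZMod (p^s)) × (Fin m → ZMod (p^s)) :=
      fun uv => (fun i => σ (uv.1 i), fun i => ρ (uv.2 i)) with hgdef
    have hψσ : ∀ x : ZMod (p^(s+1)), π x = 0 → ψ (σ x) = x := fun x hx =>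
      Function.invFun_eq (mem_range_psi p s x hx)
    have hσψ : ∀ y, σ (ψ y) = y := Function.leftInverse_invFun (psi_injective p s)
    have hdot : ∀ (y : Fin m → ZMod (p^s)) (v : Fin m → ZMod (p^(s+1))),
        ∑ i, ψ (y i) * v i = ψ (∑ i, y i * ρ (v i)) := by
      intro y v
      rw [map_sum]
      exact Finset.sum_congr rfl fun i _ => (psi_mul p s (y i) (v i)).symm
    have hmap : ∀ uv ∈ A.filter P, g uv ∈ A' := by
      intro uv h
      rw [Finset.mem_filter, memA] at h
      rw [memA']
      apply psi_injective p s
      show ψ (∑ i, σ (uv.1 i) * ρ (uv.2 i)) = ψ 0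
      rw [← hdot, map_zero]
      calc ∑ i, ψ (σ (uv.1 i)) * uv.2 i = ∑ i, uv.1 i * uv.2 i :=
            Finset.sum_congr rfl fun i _ => by rw [hψσ _ (h.2 i)]
        _ = 0 := h.1
    rw [Finset.card_eq_sum_card_fiberwise hmap]
    have hfiber : ∀ yw ∈ A', ((A.filter P).filter (fun uv => g uv = yw)).card = p^m := by
      rintro ⟨y, w⟩ hyw
      rw [memA'] at hyw
      have hbij : ((A.filter P).filter (fun uv => g uv = (y, w))).card
          = (Finset.univ.filter
              (fun v : Fin m → ZMod (p^(s+1)) => ∀ i, ρ (v i) = w i)).card := by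
        refine Finset.card_bij' (fun uv _ => uv.2) (fun v _ => (fun i => ψ (y i), v))
          ?hi ?hj ?li ?ri
        case hi =>
          intro uv h
          rw [Finset.mem_filter, Finset.mem_filter, memA] at h
          rw [Finset.mem_filter]
          refine ⟨Finset.mem_univ _, fun i => ?_⟩
          have := congrArg Prod.snd h.2
          exact congrFun this i
        case hj =>
          intro v hv
          rw [Finset.mem_filter] at hv
          rw [Finset.mem_filter, Finset.mem_filter, memA]
          refine ⟨⟨?_, fun i => pi_psi p s (y i)⟩, ?_⟩
          · rw [hdot]
            have heq : ∑ i, y i * ρ (v i) = ∑ i, y i * w i :=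
              Finset.sum_congr rfl fun i _ => by rw [hv.2 i]
            rw [heq, hyw, map_zero]
          · rw [hgdef]
            have e1 : (fun i => σ (ψ (y i))) = y := by funext i; exact hσψ (y i)
            have e2 : (fun i => ρ (v i)) = w := by funext i; exact hv.2 i
            show ((fun i => σ (ψ (y i))), (fun i => ρ (v i))) = (y, w)
            rw [e1, e2]
        case li =>
          rintro ⟨u1, v1⟩ h
          rw [Finset.mem_filter, Finset.mem_filter, memA] at h
          have h1 : (fun i => σ (u1 i)) = y := congrArg Prod.fst h.2
          have hu1 : (fun i => ψ (y i)) = u1 := by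
            funext i
            rw [← congrFun h1 i, hψσ _ (h.1.2 i)]
          rw [hu1]
        case ri =>
          intro v _
          rfl
      have h2 : (Finset.univ.filter
          (fun v : Fin m → ZMod (p^(s+1)) => ∀ i, ρ (v i) = w i)).card
          = ∏ i : Fin m,
            (Finset.univ.filter (fun x : ZMod (p^(s+1)) => ρ x = w i)).card :=
        by convert card_filter_pi' (⇑ρ) w using 2
           all_goals first
             | exact filter_inst_irrel _ _ _ _
             | infer_instance
      rw [hbij, h2]
      have h3 : ∀ i : Fin m, (Finset.univ.filter
          (fun x : ZMod (p^(s+1)) => ρ x = w i)).card = p := fun i => hrhocard (w i)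
      rw [Finset.prod_congr rfl (fun i _ => h3 i), Finset.prod_const, Finset.card_univ,
        Fintype.card_fin]
    rw [Finset.sum_congr rfl hfiber, Finset.sum_const, smul_eq_mul, mul_comm]
    rfl
  rw [hA, ← hsplit, hPartA, hPartB, Nat.add_comm]

lemma Ncard_closed_nat (p : ℕ) [hp : Fact p.Prime] (m' r : ℕ) :
    (Ncard p (m'+1) r : ℂ) = (p:ℂ)^(2*r*m'+r)
      + ∑ j ∈ Finset.range r,
          ((p:ℂ)^(r*m'+r+j*m') - (p:ℂ)^(r*m'+j*m') * (p:ℂ)^(r-1)) := by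
  induction r with
  | zero => simp [Ncard_zero]
  | succ r ih =>
    have hple : p^(r*(m'+1)) ≤ p^((r+1)*(m'+1)) :=
      Nat.pow_le_pow_right (Nat.pos_of_ne_zero hp.out.ne_zero)
        (Nat.mul_le_mul_right _ (Nat.le_succ r))
    rw [Ncard_succ p (m'+1) (Nat.le_add_left 1 m') r]
    push_cast [Nat.cast_sub hple]
    rw [ih, Finset.sum_range_succ, mul_add ((p:ℂ)^(m'+1)), Finset.mul_sum]
    have hterm : ∀ j ∈ Finset.range r,
        (p:ℂ)^(m'+1) * ((p:ℂ)^(r*m'+r+j*m') - (p:ℂ)^(r*m'+j*m') * (p:ℂ)^(r-1))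
          = (p:ℂ)^((r+1)*m'+(r+1)+j*m')
            - (p:ℂ)^((r+1)*m'+j*m') * (p:ℂ)^r := by
      intro j hj
      have hr1 : 1 ≤ r := Nat.one_le_iff_ne_zero.2 (by
        rintro rfl; simp at hj)
      rw [mul_sub, ← pow_add, ← mul_assoc, ← pow_add, ← pow_add, ← pow_add]
      congr 1
      · congr 1; ring
      · congr 1
        have e1 : (r+1)*m' = r*m'+m' := by ring
        omega
    rw [Finset.sum_congr rfl hterm]
    ring

lemma Bsum_eq_Ncard (p : ℕ) [NeZero p] (m r : ℕ) (a b : Fin m → ℤ)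
    (hdvd : ∀ i, (p : ℤ) ^ r ∣ a i ∧ (p : ℤ) ^ r ∣ b i) :
    Bsum p m r a b = (Ncard p m r : ℂ) := by
  have ha : ∀ i, ((a i : ZMod (p ^ r))) = 0 := fun i => by
    rw [ZMod.intCast_zmod_eq_zero_iff_dvd]
    exact_mod_cast (hdvd i).1
  have hb : ∀ i, ((b i : ZMod (p ^ r))) = 0 := fun i => by
    rw [ZMod.intCast_zmod_eq_zero_iff_dvd]
    exact_mod_cast (hdvd i).2
  have h1 : ∀ uv : (Fin m → ZMod (p^r)) × (Fin m → ZMod (p^r)),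
      (∑ i, ((a i : ZMod (p ^ r)) * uv.2 i + (b i : ZMod (p ^ r)) * uv.1 i)) = 0 := by
    intro uv; simp [ha, hb]
  have h2 : eZMod (p^r) 0 = 1 := by simp [eZMod]
  calc Bsum p m r a b
      = ∑ uv : (Fin m → ZMod (p^r)) × (Fin m → ZMod (p^r)),
          if (∑ i, uv.1 i * uv.2 i) = 0 then (1:ℂ) else 0 := by
        rw [Bsum]; exact Finset.sum_congr rfl fun uv _ => by rw [h1 uv, h2]
    _ = ((Finset.univ.filter
          (fun uv : (Fin m → ZMod (p^r)) × (Fin m → ZMod (p^r)) =>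
            ∑ i, uv.1 i * uv.2 i = 0)).card : ℂ) := by
        rw [Finset.sum_boole]
    _ = (Ncard p m r : ℂ) := by rw [Ncard]

lemma closed_zpow (p : ℕ) (m' r : ℕ) (hr : 1 ≤ r) :
    (p:ℂ)^(2*r*m'+r)
      + ∑ j ∈ Finset.range r,
          ((p:ℂ)^(r*m'+r+j*m') - (p:ℂ)^(r*m'+j*m') * (p:ℂ)^(r-1))
    = (p : ℂ) ^ (2 * (r : ℤ) * ((m'+1 : ℕ) : ℤ) - (r : ℤ)) +
      ∑ j ∈ Finset.range r,
        ((p : ℂ) ^ ((r : ℤ) * ((m'+1:ℕ) : ℤ) + (j : ℤ) * ((m'+1:ℕ) : ℤ) - (j : ℤ)) -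
          (p : ℂ) ^ ((r : ℤ) * ((m'+1:ℕ):ℤ) + (j : ℤ) * ((m'+1:ℕ):ℤ) - (j : ℤ) - 1)) := by
  congr 1
  · rw [show (2 * (r : ℤ) * ((m'+1 : ℕ) : ℤ) - (r : ℤ)) = ((2*r*m'+r : ℕ) : ℤ) from by
      push_cast; ring, zpow_natCast]
  · refine Finset.sum_congr rfl fun j hj => ?_
    rw [show ((r : ℤ) * ((m'+1:ℕ) : ℤ) + (j : ℤ) * ((m'+1:ℕ) : ℤ) - (j : ℤ))
        = ((r*m'+r+j*m' : ℕ) : ℤ) from by push_cast; ring, zpow_natCast]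
    rw [← pow_add]
    rw [show (((r*m'+r+j*m' : ℕ) : ℤ) - 1) = (((r*m'+j*m'+(r-1)) : ℕ) : ℤ) from by
        push_cast [Nat.cast_sub hr]; ring, zpow_natCast]


theorem Bsum_eval_of_dvd (p : ℕ) (hp : p.Prime) [NeZero p] (m : ℕ) (hm : 1 ≤ m)
    (a b : Fin m → ℤ) (r : ℕ) (hr : 1 ≤ r)
    (hdvd : ∀ i, (p : ℤ) ^ r ∣ a i ∧ (p : ℤ) ^ r ∣ b i) :
    Bsum p m r a b = (p : ℂ) ^ (2 * (r : ℤ) * (m : ℤ) - (r : ℤ)) +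
      ∑ j ∈ Finset.range r,
        ((p : ℂ) ^ ((r : ℤ) * (m : ℤ) + (j : ℤ) * (m : ℤ) - (j : ℤ)) -
          (p : ℂ) ^ ((r : ℤ) * (m : ℤ) + (j : ℤ) * (m : ℤ) - (j : ℤ) - 1)) := by
  haveI : Fact p.Prime := ⟨hp⟩
  obtain ⟨m', rfl⟩ : ∃ m', m = m' + 1 := ⟨m - 1, (Nat.succ_pred_eq_of_pos hm).symm⟩
  rw [Bsum_eq_Ncard p (m'+1) r a b hdvd, Ncard_closed_nat, closed_zpow p m' r hr]
end

section
/- Let η ∈ ℤ^{2m} with q(η) ≠ 0, and let k, k' be as in the context. Then for every integer r with k + k' < r ≤ 2k + k', B_r(η) = Σ_{j=0}^{2k+k'−r} (p^{rm+j(m−1)} − p^{rm+j(m−1)−1}) − p^{r+(2k+k')(m−1)+m−2}. -/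
open scoped BigOperators

noncomputable def eInt (n : ℕ) (x : ℤ) : ℂ :=
  Complex.exp (2 * Real.pi * Complex.I * (x : ℂ) / (n : ℂ))

lemma eInt_add (n : ℕ) (x y : ℤ) : eInt n (x + y) = eInt n x * eInt n y := by
  rw [eInt, eInt, eInt, ← Complex.exp_add]
  congr 1
  push_cast
  ring

lemma eInt_zero (n : ℕ) : eInt n 0 = 1 := by simp [eInt]

lemma eInt_dvd_eq_one (n : ℕ) {x : ℤ} (h : (n : ℤ) ∣ x) : eInt n x = 1 := by
  obtain ⟨y, rfl⟩ := h
  by_cases hn : n = 0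
  · subst hn; simp [eInt]
  have hn' : (n : ℂ) ≠ 0 := by exact_mod_cast hn
  rw [eInt]
  have : 2 * (Real.pi : ℂ) * Complex.I * (((n : ℤ) * y : ℤ) : ℂ) / (n : ℂ)
      = (y : ℂ) * (2 * (Real.pi : ℂ) * Complex.I) := by
    push_cast
    field_simp
  rw [this, Complex.exp_int_mul_two_pi_mul_I]

lemma eInt_congr (n : ℕ) {x y : ℤ} (h : (n : ℤ) ∣ x - y) : eInt n x = eInt n y := by
  have : x = y + (x - y) := by ring
  rw [this, eInt_add, eInt_dvd_eq_one n h, mul_one]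

lemma eInt_ne_one (n : ℕ) (hn : n ≠ 0) {x : ℤ} (h : ¬ (n : ℤ) ∣ x) : eInt n x ≠ 1 := by
  intro hone
  rw [eInt, Complex.exp_eq_one_iff] at hone
  obtain ⟨c, hc⟩ := hone
  apply h
  have hn' : (n : ℂ) ≠ 0 := by exact_mod_cast hn
  have h2 : (2 * (Real.pi : ℂ) * Complex.I) ≠ 0 := by
    simp [Real.pi_ne_zero, Complex.I_ne_zero]
  have hx : (x : ℂ) = ((n * c : ℤ) : ℂ) := by
    field_simp at hc
    push_cast
    have h2' : (2 * (Real.pi : ℂ) * Complex.I) ≠ 0 := h2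
    apply mul_left_cancel₀ h2'
    linear_combination (2 * (Real.pi : ℂ) * Complex.I) * hc
  exact ⟨c, by exact_mod_cast hx⟩

lemma eInt_nat_mul (n : ℕ) (t : ℕ) (x : ℤ) : eInt n ((t : ℤ) * x) = (eInt n x) ^ t := by
  rw [eInt, eInt, ← Complex.exp_nat_mul]
  congr 1
  push_cast
  ring

lemma eInt_orth (n : ℕ) (hn : n ≠ 0) (x : ℤ) :
    ∑ t ∈ Finset.range n, eInt n ((t : ℤ) * x) = if (n : ℤ) ∣ x then (n : ℂ) else 0 := by
  split_ifs with h
  · rw [Finset.sum_congr rfl (fun t _ => eInt_dvd_eq_one n (Dvd.dvd.mul_left h _))]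
    simp
  · have hne := eInt_ne_one n hn h
    have : ∀ t ∈ Finset.range n, eInt n ((t : ℤ) * x) = (eInt n x) ^ t :=
      fun t _ => eInt_nat_mul n t x
    rw [Finset.sum_congr rfl this, geom_sum_eq hne n]
    have : eInt n x ^ n = 1 := by
      rw [← eInt_nat_mul, mul_comm]
      exact eInt_dvd_eq_one n ⟨x, by ring⟩
    rw [this, sub_self, zero_div]

lemma eInt_sum {ι : Type*} (n : ℕ) (s : Finset ι) (f : ι → ℤ) :
    eInt n (∑ i ∈ s, f i) = ∏ i ∈ s, eInt n (f i) := by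
  classical
  induction s using Finset.induction with
  | empty => simp [eInt_zero]
  | insert i s hx ih => rw [Finset.sum_insert hx, Finset.prod_insert hx, eInt_add, ih]

lemma eInt_shift (A B : ℕ) (hA : A ≠ 0) (hB : B ≠ 0) (z : ℤ) :
    eInt (A * B) ((A : ℤ) * z) = eInt B z := by
  rw [eInt, eInt]
  congr 1
  have hA' : (A : ℂ) ≠ 0 := by exact_mod_cast hA
  have hB' : (B : ℂ) ≠ 0 := by exact_mod_cast hB
  push_cast
  field_simp

def invmod (q w : ℕ) : ℕ := w ^ (Nat.totient q - 1) % q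

lemma invmod_lt (q w : ℕ) (hq : 0 < q) : invmod q w < q := Nat.mod_lt _ hq

lemma invmod_mul_self (q w : ℕ) (hq : 0 < q) (h : Nat.Coprime w q) :
    w * invmod q w ≡ 1 [MOD q] := by
  have hφ : 1 ≤ Nat.totient q := Nat.totient_pos.2 hq
  calc w * invmod q w ≡ w * w ^ (Nat.totient q - 1) [MOD q] :=
        Nat.ModEq.mul_left w (Nat.mod_modEq _ q)
    _ = w ^ Nat.totient q := by rw [← pow_succ']; congr 1; omega
    _ ≡ 1 [MOD q] := Nat.ModEq.pow_totient h

lemma coprime_invmod (q w : ℕ) (hq : 2 ≤ q) (h : Nat.Coprime w q) :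
    Nat.Coprime (invmod q w) q := by
  have h1 := invmod_mul_self q w (by omega) h
  -- gcd (invmod q w) q divides 1
  have hd : Nat.gcd (invmod q w) q ∣ 1 := by
    have h2 : Nat.gcd (invmod q w) q ∣ w * invmod q w := Dvd.dvd.mul_left (Nat.gcd_dvd_left _ _) w
    have h3 : Nat.gcd (invmod q w) q ∣ q := Nat.gcd_dvd_right _ _
    have h4 : (w * invmod q w) % q = 1 % q := h1
    have h5 : 1 % q = 1 := Nat.mod_eq_of_lt (by omega)
    have h6 : w * invmod q w = q * (w * invmod q w / q) + 1 := by
      conv_lhs => rw [← Nat.div_add_mod (w * invmod q w) q]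
      omega
    have h7 : Nat.gcd (invmod q w) q ∣ q * (w * invmod q w / q) := Dvd.dvd.mul_right h3 _
    have h8 : Nat.gcd (invmod q w) q ∣ 1 := (Nat.dvd_add_right h7).mp (by rw [← h6]; exact h2)
    exact h8
  exact Nat.eq_one_of_dvd_one hd

lemma invmod_invmod (q w : ℕ) (hq : 2 ≤ q) (h : Nat.Coprime w q) (hlt : w < q) :
    invmod q (invmod q w) = w := by
  set i := invmod q w with hi
  have h1 := invmod_mul_self q w (by omega) h
  have hci := coprime_invmod q w hq h
  have h2 := invmod_mul_self q i (by omega) hci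
  have key : w ≡ invmod q i [MOD q] := by
    calc w = w * 1 := by ring
      _ ≡ w * (i * invmod q i) [MOD q] := Nat.ModEq.mul_left w h2.symm
      _ = invmod q i * (w * i) := by ring
      _ ≡ invmod q i * 1 [MOD q] := Nat.ModEq.mul_left _ h1
      _ = invmod q i := by ring
  have : w % q = invmod q i % q := key
  rw [Nat.mod_eq_of_lt hlt, Nat.mod_eq_of_lt (invmod_lt q i (by omega))] at this
  omega

lemma ramanujan_sum (p : ℕ) (hp : p.Prime) (e : ℕ) (he : 1 ≤ e) (n : ℤ) :
    ∑ w ∈ (Finset.range (p ^ e)).filter (fun w => ¬ p ∣ w), eInt (p ^ e) (n * (w : ℤ))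
      = (if (p : ℤ) ^ e ∣ n then ((p : ℂ)) ^ e else 0)
        - (if (p : ℤ) ^ (e - 1) ∣ n then ((p : ℂ)) ^ (e - 1) else 0) := by
  classical
  have hp0 : p ≠ 0 := hp.ne_zero
  have hfull : ∀ E : ℕ, ∑ w ∈ Finset.range (p ^ E), eInt (p ^ E) (n * (w : ℤ))
      = if (p : ℤ) ^ E ∣ n then ((p : ℂ)) ^ E else 0 := by
    intro E
    have horth := eInt_orth (p ^ E) (pow_ne_zero E hp0) n
    rw [Finset.sum_congr rfl (fun w _ => by rw [mul_comm])] at horth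
    rw [horth]
    norm_num [Nat.cast_pow]
  have hpart : ∑ w ∈ (Finset.range (p ^ e)).filter (fun w => p ∣ w), eInt (p ^ e) (n * (w : ℤ))
      = ∑ y ∈ Finset.range (p ^ (e - 1)), eInt (p ^ (e - 1)) (n * (y : ℤ)) := by
    have hpe : p * p ^ (e - 1) = p ^ e := by
      rw [← pow_succ']; congr 1; omega
    apply Finset.sum_nbij' (i := fun w => w / p) (j := fun y => p * y)
    · intro w hw
      simp only [Finset.mem_filter, Finset.mem_range] at hw
      simp only [Finset.mem_range]
      rw [Nat.div_lt_iff_lt_mul hp.pos]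
      calc w < p ^ e := hw.1
        _ = p ^ (e-1) * p := by rw [mul_comm, hpe]
    · intro y hy
      simp only [Finset.mem_range] at hy
      simp only [Finset.mem_filter, Finset.mem_range]
      constructor
      · calc p * y < p * p ^ (e-1) := by
              exact (Nat.mul_lt_mul_left hp.pos).2 hy
          _ = p ^ e := hpe
      · exact Dvd.intro y rfl
    · intro w hw
      simp only [Finset.mem_filter] at hw
      exact Nat.mul_div_cancel' hw.2 
    · intro y _
      exact Nat.mul_div_cancel_left y hp.pos
    · intro w hw
      simp only [Finset.mem_filter] at hw
      obtain ⟨c, rfl⟩ := hw.2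
      rw [Nat.mul_div_cancel_left c hp.pos, ← hpe]
      have : n * ((p * c : ℕ) : ℤ) = (p : ℤ) * (n * (c : ℤ)) := by push_cast; ring
      rw [this, eInt_shift p (p ^ (e-1)) hp0 (pow_ne_zero _ hp0)]
  have hsplit := Finset.sum_filter_add_sum_filter_not (Finset.range (p ^ e)) (fun w => p ∣ w)
    (fun w => eInt (p ^ e) (n * (w : ℤ)))
  have hgoal : ∑ w ∈ (Finset.range (p ^ e)).filter (fun w => ¬ p ∣ w), eInt (p ^ e) (n * (w : ℤ))
      = (∑ w ∈ Finset.range (p ^ e), eInt (p ^ e) (n * (w : ℤ)))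
        - ∑ w ∈ (Finset.range (p ^ e)).filter (fun w => p ∣ w), eInt (p ^ e) (n * (w : ℤ)) := by
    rw [← hsplit]; ring
  rw [hgoal, hfull e, hpart, hfull (e - 1)]

lemma ap_empty (p : ℕ) (hp : p.Prime) (s r : ℕ) (hs : s ≤ r) (t : ℕ)
    (htd : (p : ℤ) ^ s ∣ (t : ℤ)) (a b : ℤ) (ha : ¬ (p : ℤ) ^ s ∣ a) :
    ∑ X ∈ (Finset.range (p ^ r)).filter (fun X : ℕ => (p : ℤ) ^ r ∣ (t : ℤ) * (X : ℤ) + a),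
      eInt (p ^ r) (b * (X : ℤ)) = 0 := by
  rw [Finset.filter_false_of_mem, Finset.sum_empty]
  intro X _ hX
  apply ha
  have h1 : (p : ℤ) ^ s ∣ (p : ℤ) ^ r := pow_dvd_pow _ hs
  have h2 : (p : ℤ) ^ s ∣ (t : ℤ) * (X : ℤ) := htd.mul_right _
  have h3 : (p : ℤ) ^ s ∣ (t : ℤ) * (X : ℤ) + a := h1.trans hX
  have : a = ((t : ℤ) * (X : ℤ) + a) - (t : ℤ) * (X : ℤ) := by ring
  rw [this]
  exact dvd_sub h3 h2

lemma ap_eval (p : ℕ) (hp : p.Prime) (s r : ℕ) (hs : s < r) (t w : ℕ) (hw : ¬ p ∣ w)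
    (ht : (t : ℤ) = (p : ℤ) ^ s * (w : ℤ))
    (w' : ℤ) (hw' : ((p : ℤ) ^ (r - s)) ∣ (w : ℤ) * w' - 1)
    (a b c : ℤ) (ha : a = (p : ℤ) ^ s * c) :
    ∑ X ∈ (Finset.range (p ^ r)).filter (fun X : ℕ => (p : ℤ) ^ r ∣ (t : ℤ) * (X : ℤ) + a),
      eInt (p ^ r) (b * (X : ℤ))
    = if (p : ℤ) ^ s ∣ b then ((p : ℂ)) ^ s * eInt (p ^ r) (-c * b * w') else 0 := by
  classical
  have hp0 : p ≠ 0 := hp.ne_zero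
  set q' : ℕ := p ^ (r - s) with hq'
  have hq'0 : 0 < q' := pow_pos hp.pos _
  have hq'r : p ^ r = p ^ s * q' := by rw [hq', ← pow_add]; congr 1; omega
  have hq'rZ : (p : ℤ) ^ r = (p : ℤ) ^ s * (q' : ℤ) := by exact_mod_cast hq'r
  have hq'Z0 : (0 : ℤ) < (q' : ℤ) := by exact_mod_cast hq'0
  set x0int : ℤ := (-c * w') % (q' : ℤ) with hx0int
  have hx0nonneg : 0 ≤ x0int := Int.emod_nonneg _ (by omega)
  have hx0lt : x0int < (q' : ℤ) := Int.emod_lt_of_pos _ hq'Z0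
  set x0 : ℕ := x0int.toNat with hx0
  have hx0cast : (x0 : ℤ) = x0int := Int.toNat_of_nonneg hx0nonneg
  have hx0ltn : x0 < q' := by omega
  have hd2 : (q' : ℤ) ∣ (-c * w') - x0int := ⟨(-c * w') / q', by rw [hx0int, Int.emod_def]; ring⟩
  have hd2' : (q' : ℤ) ∣ x0int - (-c * w') := by
    rw [show x0int - (-c * w') = -((-c * w') - x0int) by ring]
    exact dvd_neg.mpr hd2
  have hps0 : ((p : ℤ) ^ s) ≠ 0 := pow_ne_zero _ (by exact_mod_cast hp0)
  have hw2 : (q' : ℤ) ∣ (w : ℤ) * w' - 1 := by rw [hq']; exact_mod_cast hw'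
  have key : ∀ X : ℕ, ((p : ℤ) ^ r ∣ (t : ℤ) * (X : ℤ) + a ↔ (q' : ℤ) ∣ (X : ℤ) - (x0 : ℤ)) := by
    intro X
    have hfac : (t : ℤ) * (X : ℤ) + a = (p : ℤ) ^ s * ((w : ℤ) * X + c) := by
      rw [ht, ha]; ring
    rw [hfac, hq'rZ, mul_dvd_mul_iff_left hps0]
    constructor
    · intro h
      have heq : (X : ℤ) - (x0 : ℤ)
          = w' * ((w : ℤ) * X + c) - (X : ℤ) * ((w : ℤ) * w' - 1) + ((-c * w') - x0int) := by
        rw [hx0cast]; ring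
      rw [heq]
      exact dvd_add (dvd_sub (h.mul_left w') (hw2.mul_left _)) hd2
    · intro h
      have heq : (w : ℤ) * X + c
          = (w : ℤ) * ((X : ℤ) - (x0 : ℤ))
            + ((w : ℤ) * (x0int - (-c * w')) - c * ((w : ℤ) * w' - 1)) := by
        rw [hx0cast]; ring
      rw [heq]
      exact dvd_add (h.mul_left _) (dvd_sub (hd2'.mul_left _) (hw2.mul_left _))
  -- reindex the filtered sum as a sum over j ∈ range (p ^ s)
  have hreindex : ∑ X ∈ (Finset.range (p ^ r)).filter
        (fun X : ℕ => (p : ℤ) ^ r ∣ (t : ℤ) * (X : ℤ) + a), eInt (p ^ r) (b * (X : ℤ))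
      = ∑ j ∈ Finset.range (p ^ s), eInt (p ^ r) (b * ((x0 : ℤ) + (j : ℤ) * (q' : ℤ))) := by
    apply Finset.sum_nbij' (i := fun X => (X - x0) / q') (j := fun j => x0 + j * q')
    · intro X hX
      simp only [Finset.mem_filter, Finset.mem_range] at hX
      simp only [Finset.mem_range]
      rw [Nat.div_lt_iff_lt_mul hq'0]
      have : X < p ^ s * q' := by rw [← hq'r]; exact hX.1
      omega
    · intro j hj
      simp only [Finset.mem_range] at hj
      simp only [Finset.mem_filter, Finset.mem_range]
      constructor
      · have h1 : (j + 1) * q' ≤ p ^ s * q' := Nat.mul_le_mul_right _ (by omega)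
        have h3 : (j + 1) * q' = j * q' + q' := by ring
        rw [hq'r]
        omega
      · rw [key]
        refine ⟨j, ?_⟩
        push_cast
        ring
    · intro X hX
      simp only [Finset.mem_filter, Finset.mem_range] at hX
      have hdvd : (q' : ℤ) ∣ (X : ℤ) - (x0 : ℤ) := (key X).mp hX.2
      -- derive X % q' = x0 in ℕ
      have hmodZ : (X : ℤ) % q' = (x0 : ℤ) % q' := Int.modEq_iff_dvd.mpr (by
        rw [show (x0 : ℤ) - (X : ℤ) = -((X : ℤ) - (x0 : ℤ)) by ring]
        exact dvd_neg.mpr hdvd)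
      have hmodN : X % q' = x0 % q' := by exact_mod_cast hmodZ
      have hx0m : x0 % q' = x0 := Nat.mod_eq_of_lt hx0ltn
      have hge : x0 ≤ X := by
        have := Nat.mod_le X q'
        omega
      have hdvdN : q' ∣ X - x0 := (Nat.modEq_iff_dvd' hge).mp (hmodN.symm)
      rw [Nat.div_mul_cancel hdvdN]
      omega
    · intro j _
      rw [Nat.add_sub_cancel_left, Nat.mul_div_cancel _ hq'0]
    · intro X hX
      simp only [Finset.mem_filter, Finset.mem_range] at hX
      have hdvd : (q' : ℤ) ∣ (X : ℤ) - (x0 : ℤ) := (key X).mp hX.2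
      have hmodZ : (X : ℤ) % q' = (x0 : ℤ) % q' := Int.modEq_iff_dvd.mpr (by
        rw [show (x0 : ℤ) - (X : ℤ) = -((X : ℤ) - (x0 : ℤ)) by ring]
        exact dvd_neg.mpr hdvd)
      have hmodN : X % q' = x0 % q' := by exact_mod_cast hmodZ
      have hx0m : x0 % q' = x0 := Nat.mod_eq_of_lt hx0ltn
      have hge : x0 ≤ X := by
        have := Nat.mod_le X q'
        omega
      have hdvdN : q' ∣ X - x0 := (Nat.modEq_iff_dvd' hge).mp (hmodN.symm)
      have hXeq : x0 + (X - x0) / q' * q' = X := by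
        rw [Nat.div_mul_cancel hdvdN]
        omega
      have h5 : ((x0 : ℤ) + (((X - x0) / q' : ℕ) : ℤ) * (q' : ℤ)) = (X : ℤ) := by
        have h6 := congrArg (Nat.cast (R := ℤ)) hXeq
        rw [Nat.cast_add, Nat.cast_mul] at h6
        exact h6
      congr 1
      rw [← h5]
  rw [hreindex]
  -- split each term
  have hterm : ∀ j : ℕ, eInt (p ^ r) (b * ((x0 : ℤ) + (j : ℤ) * (q' : ℤ)))
      = eInt (p ^ r) (b * (x0 : ℤ)) * eInt (p ^ s) ((j : ℤ) * b) := by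
    intro j
    have : b * ((x0 : ℤ) + (j : ℤ) * (q' : ℤ)) = b * (x0 : ℤ) + (q' : ℤ) * ((j : ℤ) * b) := by
      ring
    rw [this, eInt_add]
    congr 1
    have hqr2 : p ^ r = q' * p ^ s := by rw [hq'r]; ring
    rw [hqr2, eInt_shift q' (p ^ s) (by omega) (pow_ne_zero _ hp0)]
  rw [Finset.sum_congr rfl (fun j _ => hterm j), ← Finset.mul_sum,
    eInt_orth (p ^ s) (pow_ne_zero _ hp0) b]
  have hcast1 : ((p ^ s : ℕ) : ℤ) = (p : ℤ) ^ s := by push_cast; ring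
  have hcast2 : ((p ^ s : ℕ) : ℂ) = (p : ℂ) ^ s := by push_cast; ring
  rw [hcast1, hcast2]
  split_ifs with hb
  · rw [mul_comm]
    congr 1
    apply eInt_congr
    -- p^r ∣ b*x0 - (-c*b*w') = b*(x0 + c*w')
    obtain ⟨b2, rfl⟩ := hb
    have hq'd : (q' : ℤ) ∣ (x0 : ℤ) + c * w' := by
      have : (x0 : ℤ) + c * w' = -((-c * w') - x0int) + 0 := by rw [hx0cast]; ring
      rw [this, add_zero]
      exact dvd_neg.mpr hd2
    obtain ⟨d, hd⟩ := hq'd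
    refine ⟨b2 * d, ?_⟩
    have hcastr : ((p ^ r : ℕ) : ℤ) = (p : ℤ) ^ r := by push_cast; ring
    rw [hcastr, hq'rZ]
    have : (p : ℤ) ^ s * b2 * (x0 : ℤ) - -c * ((p : ℤ) ^ s * b2) * w'
        = (p : ℤ) ^ s * b2 * ((x0 : ℤ) + c * w') := by ring
    rw [this, hd]
    ring
  · rw [mul_zero]

lemma eZMod_intCast_s4 (n : ℕ) [NeZero n] (x : ℤ) : eZMod n ((x : ZMod n)) = eInt n x := by
  have h1 : eZMod n ((x : ZMod n)) = eInt n ((((x : ZMod n)).val : ℕ) : ℤ) := by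
    rw [eZMod, eInt]; norm_num
  rw [h1]
  apply eInt_congr
  rw [ZMod.val_intCast]
  exact ⟨-(x / n), by rw [Int.emod_def]; ring⟩

lemma sum_zmod_val (N : ℕ) [NeZero N] (f : ℕ → ℂ) :
    ∑ x : ZMod N, f x.val = ∑ X ∈ Finset.range N, f X := by
  apply Finset.sum_nbij' (i := fun x : ZMod N => x.val) (j := fun X : ℕ => (X : ZMod N))
  · intro x _; exact Finset.mem_range.mpr (ZMod.val_lt x)
  · intro X _; exact Finset.mem_univ _
  · intro x _; exact ZMod.natCast_rightInverse x
  · intro X hX; rw [ZMod.val_natCast, Nat.mod_eq_of_lt (Finset.mem_range.mp hX)]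
  · intro x _; rfl

lemma Bsum_structure (p : ℕ) [NeZero p] (m r : ℕ) (a b : Fin m → ℤ) :
    Bsum p m r a b = ((p ^ r : ℕ) : ℂ)⁻¹ * ∑ t ∈ Finset.range (p ^ r), ∏ i : Fin m,
      (((p ^ r : ℕ) : ℂ) * ∑ X ∈ (Finset.range (p ^ r)).filter
          (fun X : ℕ => ((p ^ r : ℕ) : ℤ) ∣ (t : ℤ) * (X : ℤ) + a i),
        eInt (p ^ r) (b i * (X : ℤ))) := by
  classical
  set N := p ^ r with hN
  have hN0 : N ≠ 0 := pow_ne_zero r (NeZero.ne p)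
  haveI : NeZero N := ⟨hN0⟩
  have hNC : ((N : ℕ) : ℂ) ≠ 0 := Nat.cast_ne_zero.mpr hN0
  -- Step A: pointwise integer form
  have hpoint : ∀ uv : (Fin m → ZMod N) × (Fin m → ZMod N),
      (if (∑ i, uv.1 i * uv.2 i) = 0 then
        eZMod N (∑ i, ((a i : ZMod N) * uv.2 i + (b i : ZMod N) * uv.1 i)) else 0)
      = if (N : ℤ) ∣ (∑ i, ((uv.1 i).val : ℤ) * ((uv.2 i).val : ℤ)) then
          eInt N (∑ i, (a i * ((uv.2 i).val : ℤ) + b i * ((uv.1 i).val : ℤ))) else 0 := by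
    intro uv
    have hcond : (∑ i, uv.1 i * uv.2 i) = 0 ↔
        (N : ℤ) ∣ (∑ i, ((uv.1 i).val : ℤ) * ((uv.2 i).val : ℤ)) := by
      rw [← ZMod.intCast_zmod_eq_zero_iff_dvd]
      constructor <;> intro h <;> [rw [← h]; rw [← h] at *]
      · push_cast
        apply Finset.sum_congr rfl
        intro i _
        rw [ZMod.natCast_rightInverse (uv.1 i), ZMod.natCast_rightInverse (uv.2 i)]
      · symm
        push_cast
        apply Finset.sum_congr rfl
        intro i _
        rw [ZMod.natCast_rightInverse (uv.1 i), ZMod.natCast_rightInverse (uv.2 i)]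
    have hval : eZMod N (∑ i, ((a i : ZMod N) * uv.2 i + (b i : ZMod N) * uv.1 i))
        = eInt N (∑ i, (a i * ((uv.2 i).val : ℤ) + b i * ((uv.1 i).val : ℤ))) := by
      rw [← eZMod_intCast_s4 N]
      congr 1
      push_cast
      apply Finset.sum_congr rfl
      intro i _
      rw [ZMod.natCast_rightInverse (uv.1 i), ZMod.natCast_rightInverse (uv.2 i)]
    by_cases h : (N : ℤ) ∣ (∑ i, ((uv.1 i).val : ℤ) * ((uv.2 i).val : ℤ))
    · rw [if_pos (hcond.mpr h), if_pos h, hval]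
    · rw [if_neg (fun hh => h (hcond.mp hh)), if_neg h]
  rw [Bsum, Finset.sum_congr rfl (fun uv _ => hpoint uv)]
  -- Step B: orthogonality
  have hif : ∀ S E : ℤ, (if (N : ℤ) ∣ S then eInt N E else 0)
      = ((N : ℕ) : ℂ)⁻¹ * ∑ t ∈ Finset.range N, eInt N ((t : ℤ) * S + E) := by
    intro S E
    simp only [eInt_add N]
    rw [← Finset.sum_mul, eInt_orth N hN0 S]
    split_ifs with h
    · field_simp
    · simp
  rw [Finset.sum_congr rfl (fun uv _ => hif _ _), ← Finset.mul_sum]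
  congr 1
  rw [Finset.sum_comm]
  apply Finset.sum_congr rfl
  intro t _
  -- Step C: factor the exponential over coordinates
  have hfact : ∀ uv : (Fin m → ZMod N) × (Fin m → ZMod N),
      eInt N ((t : ℤ) * (∑ i, ((uv.1 i).val : ℤ) * ((uv.2 i).val : ℤ))
        + ∑ i, (a i * ((uv.2 i).val : ℤ) + b i * ((uv.1 i).val : ℤ)))
      = ∏ i, eInt N ((t : ℤ) * ((uv.1 i).val : ℤ) * ((uv.2 i).val : ℤ)
          + (a i * ((uv.2 i).val : ℤ) + b i * ((uv.1 i).val : ℤ))) := by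
    intro uv
    rw [← eInt_sum]
    congr 1
    rw [Finset.mul_sum, ← Finset.sum_add_distrib]
    apply Finset.sum_congr rfl
    intro i _
    ring
  rw [Finset.sum_congr rfl (fun uv _ => hfact uv)]
  -- Step D: swap sum and product
  rw [Fintype.sum_prod_type]
  have hD1 : ∀ u : Fin m → ZMod N,
      (∑ v : Fin m → ZMod N, ∏ i, eInt N ((t : ℤ) * ((u i).val : ℤ) * ((v i).val : ℤ)
          + (a i * ((v i).val : ℤ) + b i * ((u i).val : ℤ))))
      = ∏ i, ∑ y : ZMod N, eInt N ((t : ℤ) * ((u i).val : ℤ) * ((y).val : ℤ)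
          + (a i * ((y).val : ℤ) + b i * ((u i).val : ℤ))) := by
    intro u
    rw [Fintype.prod_sum (f := fun i (y : ZMod N) =>
      eInt N ((t : ℤ) * ((u i).val : ℤ) * ((y).val : ℤ)
          + (a i * ((y).val : ℤ) + b i * ((u i).val : ℤ))))]
  rw [Finset.sum_congr rfl (fun u _ => hD1 u)]
  rw [← Fintype.prod_sum (f := fun i (x : ZMod N) =>
      ∑ y : ZMod N, eInt N ((t : ℤ) * ((x).val : ℤ) * ((y).val : ℤ)
          + (a i * ((y).val : ℤ) + b i * ((x).val : ℤ))))]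
  -- Step E: evaluate the double sum for each coordinate
  apply Finset.prod_congr rfl
  intro i _
  rw [sum_zmod_val N (f := fun X => ∑ y : ZMod N, eInt N ((t : ℤ) * (X : ℤ) * ((y).val : ℤ)
          + (a i * ((y).val : ℤ) + b i * (X : ℤ))))]
  have hE1 : ∀ X : ℕ, (∑ y : ZMod N, eInt N ((t : ℤ) * (X : ℤ) * ((y).val : ℤ)
          + (a i * ((y).val : ℤ) + b i * (X : ℤ))))
      = if (N : ℤ) ∣ ((t : ℤ) * (X : ℤ) + a i) then ((N : ℕ) : ℂ) * eInt N (b i * (X : ℤ)) else 0 := by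
    intro X
    rw [sum_zmod_val N (f := fun Y => eInt N ((t : ℤ) * (X : ℤ) * (Y : ℤ)
          + (a i * (Y : ℤ) + b i * (X : ℤ))))]
    have : ∀ Y : ℕ, eInt N ((t : ℤ) * (X : ℤ) * (Y : ℤ) + (a i * (Y : ℤ) + b i * (X : ℤ)))
        = eInt N ((Y : ℤ) * ((t : ℤ) * (X : ℤ) + a i)) * eInt N (b i * (X : ℤ)) := by
      intro Y
      rw [← eInt_add]
      congr 1
      ring
    rw [Finset.sum_congr rfl (fun Y _ => this Y), ← Finset.sum_mul, eInt_orth N hN0]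
    split_ifs with h
    · rfl
    · rw [zero_mul]
  rw [Finset.sum_congr rfl (fun X _ => hE1 X)]
  rw [Finset.sum_ite, Finset.sum_const_zero, add_zero, ← Finset.mul_sum]

lemma nat_modeq_int_dvd {a b n : ℕ} (h : a ≡ b [MOD n]) : (n : ℤ) ∣ (a : ℤ) - (b : ℤ) := by
  have h1 : (a : ℤ) = n * (a / n : ℕ) + ((a % n : ℕ) : ℤ) := by
    exact_mod_cast (Nat.div_add_mod a n).symm
  have h2 : (b : ℤ) = n * (b / n : ℕ) + ((b % n : ℕ) : ℤ) := by
    exact_mod_cast (Nat.div_add_mod b n).symm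
  have h3 : ((a % n : ℕ) : ℤ) = ((b % n : ℕ) : ℤ) := by exact_mod_cast h
  exact ⟨(a / n : ℕ) - (b / n : ℕ), by rw [h1, h2, h3]; push_cast; ring⟩

section PF

lemma coprime_iff_not_dvd_pow (p : ℕ) (hp : p.Prime) (e w : ℕ) (he : 1 ≤ e) (hw : ¬ p ∣ w) :
    Nat.Coprime w (p ^ e) :=
  Nat.Coprime.pow_right e (Nat.coprime_comm.mp ((Nat.Prime.coprime_iff_not_dvd hp).mpr hw))

lemma invmod_inverse (p : ℕ) (hp : p.Prime) (e w : ℕ) (he : 1 ≤ e) (hw : ¬ p ∣ w) :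
    ((p : ℤ)) ^ e ∣ (w : ℤ) * (invmod (p ^ e) w : ℤ) - 1 := by
  have hq0 : 0 < p ^ e := pow_pos hp.pos _
  have hco := coprime_iff_not_dvd_pow p hp e w he hw
  have h1 := invmod_mul_self (p ^ e) w hq0 hco
  have h2 : ((p ^ e : ℕ) : ℤ) ∣ ((w * invmod (p ^ e) w : ℕ) : ℤ) - ((1 : ℕ) : ℤ) :=
    nat_modeq_int_dvd h1
  have : ((p ^ e : ℕ) : ℤ) = (p : ℤ) ^ e := by push_cast; ring
  rw [this] at h2
  convert h2 using 2 <;> push_cast <;> ring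

lemma not_dvd_invmod (p : ℕ) (hp : p.Prime) (e w : ℕ) (he : 1 ≤ e) (hw : ¬ p ∣ w) :
    ¬ p ∣ invmod (p ^ e) w := by
  intro hdvd
  have hq2 : 2 ≤ p ^ e := by
    calc 2 ≤ p := hp.two_le
    _ = p ^ 1 := (pow_one p).symm
    _ ≤ p ^ e := Nat.pow_le_pow_right hp.pos he
  have hco := coprime_invmod (p ^ e) w hq2 (coprime_iff_not_dvd_pow p hp e w he hw)
  have hpq : p ∣ p ^ e := dvd_pow_self p (by omega)
  have : p ∣ Nat.gcd (invmod (p ^ e) w) (p ^ e) := Nat.dvd_gcd hdvd hpq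
  rw [hco] at this
  have h1 := Nat.eq_one_of_dvd_one this
  have h2 := hp.two_le
  omega

/-- Evaluation of one full product over `i` for `t` in the `s`-th slice. -/
lemma prod_F_eval (p : ℕ) (hp : p.Prime) (r s : ℕ) (hs : s < r) (m : ℕ) (a b c : Fin m → ℤ)
    (hc : ∀ i, a i = (p : ℤ) ^ s * c i) (hb : ∀ i, (p : ℤ) ^ s ∣ b i)
    (t : ℕ) (htd : p ^ s ∣ t) (htd2 : ¬ p ^ (s + 1) ∣ t) :
    (∏ i, ∑ X ∈ (Finset.range (p ^ r)).filter
        (fun X : ℕ => (p : ℤ) ^ r ∣ (t : ℤ) * (X : ℤ) + a i),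
      eInt (p ^ r) (b i * (X : ℤ)))
    = (p : ℂ) ^ (s * m) *
      eInt (p ^ r) ((-∑ i, c i * b i) * (invmod (p ^ (r - s)) (t / p ^ s) : ℤ)) := by
  set w : ℕ := t / p ^ s with hwdef
  have hts : p ^ s * w = t := Nat.mul_div_cancel' htd
  have hw : ¬ p ∣ w := by
    intro ⟨y, hy⟩
    exact htd2 ⟨y, by rw [← hts, hy]; ring⟩
  have ht : (t : ℤ) = (p : ℤ) ^ s * (w : ℤ) := by exact_mod_cast hts.symm
  set w' : ℤ := (invmod (p ^ (r - s)) w : ℤ) with hw'def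
  have hw' : ((p : ℤ) ^ (r - s)) ∣ (w : ℤ) * w' - 1 :=
    invmod_inverse p hp (r - s) w (by omega) hw
  have hper : ∀ i : Fin m, (∑ X ∈ (Finset.range (p ^ r)).filter
        (fun X : ℕ => (p : ℤ) ^ r ∣ (t : ℤ) * (X : ℤ) + a i),
      eInt (p ^ r) (b i * (X : ℤ)))
      = (p : ℂ) ^ s * eInt (p ^ r) (-(c i) * b i * w') := by
    intro i
    rw [ap_eval p hp s r hs t w hw ht w' hw' (a i) (b i) (c i) (hc i), if_pos (hb i)]
  rw [Finset.prod_congr rfl (fun i _ => hper i), Finset.prod_mul_distrib,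
    Finset.prod_const, ← eInt_sum]
  congr 1
  · rw [Finset.card_univ, Fintype.card_fin, ← pow_mul]
  · congr 1
    rw [← Finset.sum_mul]
    congr 1
    rw [← Finset.sum_neg_distrib]
    apply Finset.sum_congr rfl
    intro i _
    ring

/-- Evaluation of the sum over the `s`-th slice, `s ≤ k` case. -/
lemma slice_eval (p : ℕ) (hp : p.Prime) (r s : ℕ) (hs : s < r) (m : ℕ) (a b c : Fin m → ℤ)
    (hc : ∀ i, a i = (p : ℤ) ^ s * c i) (hb : ∀ i, (p : ℤ) ^ s ∣ b i)
    (n : ℤ) (hn : (∑ i, c i * b i) = (p : ℤ) ^ s * n) :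
    ∑ t ∈ (Finset.range (p ^ r)).filter (fun t => p ^ s ∣ t ∧ ¬ p ^ (s + 1) ∣ t),
      ∏ i, ∑ X ∈ (Finset.range (p ^ r)).filter
          (fun X : ℕ => (p : ℤ) ^ r ∣ (t : ℤ) * (X : ℤ) + a i),
        eInt (p ^ r) (b i * (X : ℤ))
    = (p : ℂ) ^ (s * m) *
      ((if (p : ℤ) ^ (r - s) ∣ n then ((p : ℂ)) ^ (r - s) else 0)
        - (if (p : ℤ) ^ (r - s - 1) ∣ n then ((p : ℂ)) ^ (r - s - 1) else 0)) := by
  classical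
  have hp0 : p ≠ 0 := hp.ne_zero
  set q' : ℕ := p ^ (r - s) with hq'
  have hq'0 : 0 < q' := pow_pos hp.pos _
  have hq'2 : 2 ≤ q' := by
    calc 2 ≤ p := hp.two_le
    _ = p ^ 1 := (pow_one p).symm
    _ ≤ p ^ (r - s) := Nat.pow_le_pow_right hp.pos (by omega)
  have hq'r : p ^ r = p ^ s * q' := by rw [hq', ← pow_add]; congr 1; omega
  -- step 1+2: evaluate each term and pull out the constant
  rw [Finset.sum_congr rfl (fun t ht => by
    simp only [Finset.mem_filter] at ht
    exact prod_F_eval p hp r s hs m a b c hc hb t ht.2.1 ht.2.2), ← Finset.mul_sum]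
  congr 1
  -- step 3: reindex over w coprime to p
  have hbij : ∑ t ∈ (Finset.range (p ^ r)).filter (fun t => p ^ s ∣ t ∧ ¬ p ^ (s + 1) ∣ t),
      eInt (p ^ r) ((-∑ i, c i * b i) * (invmod q' (t / p ^ s) : ℤ))
      = ∑ w ∈ (Finset.range q').filter (fun w => ¬ p ∣ w),
        eInt (p ^ r) ((-∑ i, c i * b i) * (invmod q' w : ℤ)) := by
    apply Finset.sum_nbij' (i := fun t => t / p ^ s) (j := fun w => p ^ s * w)
    · intro t ht
      simp only [Finset.mem_filter, Finset.mem_range] at ht ⊢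
      obtain ⟨hlt, htd, htd2⟩ := ht
      constructor
      · rw [Nat.div_lt_iff_lt_mul (pow_pos hp.pos s)]
        calc t < p ^ r := hlt
          _ = q' * p ^ s := by rw [hq'r]; ring
      · intro ⟨y, hy⟩
        exact htd2 ⟨y, by rw [← Nat.mul_div_cancel' htd, hy]; ring⟩
    · intro w hw
      simp only [Finset.mem_filter, Finset.mem_range] at hw ⊢
      refine ⟨?_, Dvd.intro w rfl, ?_⟩
      · have h1 : p ^ s * w < p ^ s * q' := (Nat.mul_lt_mul_left (pow_pos hp.pos s)).2 hw.1
        rw [hq'r]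
        exact h1
      · intro ⟨y, hy⟩
        apply hw.2
        refine ⟨y, ?_⟩
        have hps : 0 < p ^ s := pow_pos hp.pos s
        have : p ^ (s + 1) * y = p ^ s * (p * y) := by ring
        rw [this] at hy
        exact Nat.eq_of_mul_eq_mul_left hps hy
    · intro t ht
      simp only [Finset.mem_filter, Finset.mem_range] at ht
      exact Nat.mul_div_cancel' ht.2.1
    · intro w _
      exact Nat.mul_div_cancel_left w (pow_pos hp.pos s)
    · intro t _
      rfl
  rw [hbij]
  -- step 4: lower the modulus from p^r to q'
  have hstep4 : ∀ w : ℕ, eInt (p ^ r) ((-∑ i, c i * b i) * (invmod q' w : ℤ))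
      = eInt q' ((-n) * (invmod q' w : ℤ)) := by
    intro w
    have harg : (-∑ i, c i * b i) * (invmod q' w : ℤ)
        = ((p ^ s : ℕ) : ℤ) * ((-n) * (invmod q' w : ℤ)) := by
      rw [hn]; push_cast; ring
    rw [harg, hq'r, eInt_shift (p ^ s) q' (pow_ne_zero _ hp0) (by omega)]
  rw [Finset.sum_congr rfl (fun w _ => hstep4 w)]
  -- step 5: replace invmod by w
  have hstep5 : ∑ w ∈ (Finset.range q').filter (fun w => ¬ p ∣ w),
      eInt q' ((-n) * (invmod q' w : ℤ))
      = ∑ w ∈ (Finset.range q').filter (fun w => ¬ p ∣ w), eInt q' ((-n) * (w : ℤ)) := by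
    apply Finset.sum_nbij' (i := fun w => invmod q' w) (j := fun w => invmod q' w)
    · intro w hw
      simp only [Finset.mem_filter, Finset.mem_range] at hw ⊢
      exact ⟨invmod_lt q' w hq'0, by rw [hq']; exact not_dvd_invmod p hp (r - s) w (by omega) hw.2⟩
    · intro w hw
      simp only [Finset.mem_filter, Finset.mem_range] at hw ⊢
      exact ⟨invmod_lt q' w hq'0, by rw [hq']; exact not_dvd_invmod p hp (r - s) w (by omega) hw.2⟩
    · intro w hw
      simp only [Finset.mem_filter, Finset.mem_range] at hw
      exact invmod_invmod q' w hq'2 (by rw [hq']; exact coprime_iff_not_dvd_pow p hp (r - s) w (by omega) hw.2) hw.1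
    · intro w hw
      simp only [Finset.mem_filter, Finset.mem_range] at hw
      exact invmod_invmod q' w hq'2 (by rw [hq']; exact coprime_iff_not_dvd_pow p hp (r - s) w (by omega) hw.2) hw.1
    · intro w _
      rfl
  rw [hstep5]
  -- step 6: Ramanujan sum
  have := ramanujan_sum p hp (r - s) (by omega) (-n)
  rw [hq', this]
  have hd1 : ((p : ℤ) ^ (r - s) ∣ -n) ↔ ((p : ℤ) ^ (r - s) ∣ n) := dvd_neg
  have hd2 : ((p : ℤ) ^ (r - s - 1) ∣ -n) ↔ ((p : ℤ) ^ (r - s - 1) ∣ n) := dvd_neg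
  rw [if_congr hd1 rfl rfl, if_congr hd2 rfl rfl]
end PF

theorem Bsum_eval_upper_range (p : ℕ) (hp : p.Prime) [NeZero p] (m : ℕ) (hm : 1 ≤ m)
    (a b : Fin m → ℤ) (k k' : ℕ)
    (hq : (∑ i, a i * b i) ≠ 0)
    (hk1 : ∀ i, (p : ℤ) ^ k ∣ a i ∧ (p : ℤ) ^ k ∣ b i)
    (hk2 : ¬ ∀ i, (p : ℤ) ^ (k + 1) ∣ a i ∧ (p : ℤ) ^ (k + 1) ∣ b i)
    (hkk' : padicValInt p (∑ i, a i * b i) = 2 * k + k')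
    (r : ℕ) (hr1 : k + k' < r) (hr2 : r ≤ 2 * k + k') :
    Bsum p m r a b =
      (∑ j ∈ Finset.range (2 * k + k' - r + 1),
        ((p : ℂ) ^ ((r : ℤ) * (m : ℤ) + (j : ℤ) * ((m : ℤ) - 1)) -
          (p : ℂ) ^ ((r : ℤ) * (m : ℤ) + (j : ℤ) * ((m : ℤ) - 1) - 1))) -
      (p : ℂ) ^ ((r : ℤ) + (2 * (k : ℤ) + (k' : ℤ)) * ((m : ℤ) - 1) + (m : ℤ) - 2) := by
  classical
  have hp0 : p ≠ 0 := hp.ne_zero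
  haveI : Fact p.Prime := ⟨hp⟩
  have hpC : (p : ℂ) ≠ 0 := by exact_mod_cast hp0
  have hQ1 : (p : ℤ) ^ (2 * k + k') ∣ (∑ i, a i * b i) := by
    rw [padicValInt_dvd_iff]
    right
    omega
  have hQ2 : ¬ (p : ℤ) ^ (2 * k + k' + 1) ∣ (∑ i, a i * b i) := by
    rw [padicValInt_dvd_iff]
    push_neg
    exact ⟨hq, by omega⟩
  have hrge1 : 1 ≤ r := by omega
  have hkr : k < r := by omega
  set J := 2 * k + k' - r with hJdef
  have hJr : J + 1 < r := by omega
  have hJk : J + 1 ≤ k := by omega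
  obtain ⟨i0, hi0⟩ := not_forall.mp hk2
  -- step 1 : structure
  rw [Bsum_structure]
  simp only [Nat.cast_pow]
  have hstep1 : ∀ t ∈ Finset.range (p ^ r), (∏ i : Fin m, (((p : ℂ)) ^ r *
      ∑ X ∈ (Finset.range (p ^ r)).filter
        (fun X : ℕ => (p : ℤ) ^ r ∣ (t : ℤ) * (X : ℤ) + a i),
      eInt (p ^ r) (b i * (X : ℤ))))
      = ((p : ℂ) ^ r) ^ m * ∏ i : Fin m, ∑ X ∈ (Finset.range (p ^ r)).filter
        (fun X : ℕ => (p : ℤ) ^ r ∣ (t : ℤ) * (X : ℤ) + a i),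
      eInt (p ^ r) (b i * (X : ℤ)) := by
    intro t _
    rw [Finset.prod_mul_distrib, Finset.prod_const, Finset.card_univ, Fintype.card_fin]
  rw [Finset.sum_congr rfl hstep1, ← Finset.mul_sum, ← mul_assoc]
  have hconst : ((p : ℂ) ^ r)⁻¹ * ((p : ℂ) ^ r) ^ m = (p : ℂ) ^ (r * (m - 1)) := by
    obtain ⟨M, rfl⟩ : ∃ M, m = M + 1 := ⟨m - 1, by omega⟩
    have h7 : ((p : ℂ) ^ r) ^ (M + 1) = (p : ℂ) ^ r * ((p : ℂ) ^ r) ^ M := by ring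
    rw [h7, ← mul_assoc, inv_mul_cancel₀ (pow_ne_zero _ hpC), one_mul, ← pow_mul]
    norm_num
  rw [hconst]
  -- the per-slice value
  set V : ℕ → ℂ := fun s =>
    (if s ≤ J then (p : ℂ) ^ (s * m) * (p : ℂ) ^ (r - s) else 0)
      - (if s ≤ J + 1 then (p : ℂ) ^ (s * m) * (p : ℂ) ^ (r - s - 1) else 0) with hV
  -- step 2 : telescoping and slice evaluation
  have hkey : ∑ t ∈ Finset.range (p ^ r), ∏ i : Fin m, ∑ X ∈ (Finset.range (p ^ r)).filter
        (fun X : ℕ => (p : ℤ) ^ r ∣ (t : ℤ) * (X : ℤ) + a i),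
      eInt (p ^ r) (b i * (X : ℤ)) = ∑ s ∈ Finset.range r, V s := by
    set G : ℕ → ℂ := fun t => ∏ i : Fin m, ∑ X ∈ (Finset.range (p ^ r)).filter
        (fun X : ℕ => (p : ℤ) ^ r ∣ (t : ℤ) * (X : ℤ) + a i),
      eInt (p ^ r) (b i * (X : ℤ)) with hG
    set Mf : ℕ → ℂ := fun s => ∑ t ∈ (Finset.range (p ^ r)).filter (fun t => p ^ s ∣ t), G t
      with hMf
    have htel := Finset.sum_range_sub' Mf r
    have hM0 : Mf 0 = ∑ t ∈ Finset.range (p ^ r), G t := by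
      simp only [hMf]
      apply Finset.sum_congr _ (fun t _ => rfl)
      apply Finset.filter_true_of_mem
      intro t _
      simp
    have hMr : Mf r = G 0 := by
      simp only [hMf]
      have hfil : (Finset.range (p ^ r)).filter (fun t => p ^ r ∣ t) = {0} := by
        ext t
        simp only [Finset.mem_filter, Finset.mem_range, Finset.mem_singleton]
        constructor
        · rintro ⟨h1, h2⟩
          rcases Nat.eq_zero_or_pos t with h | h
          · exact h
          · exact absurd (Nat.le_of_dvd h h2) (by omega)
        · rintro rfl
          exact ⟨pow_pos hp.pos r, dvd_zero _⟩
      rw [hfil, Finset.sum_singleton]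
    -- G 0 = 0
    have hGzero : G 0 = 0 := by
      simp only [hG]
      apply Finset.prod_eq_zero (Finset.mem_univ i0)
      by_cases hA : (p : ℤ) ^ r ∣ a i0
      · have hb' : ¬ ((p ^ r : ℕ) : ℤ) ∣ b i0 := by
          intro h
          apply hi0
          constructor
          · exact (pow_dvd_pow _ (by omega : k + 1 ≤ r)).trans hA
          · refine (pow_dvd_pow _ (by omega : k + 1 ≤ r)).trans ?_
            exact_mod_cast h
        have hfil : (Finset.range (p ^ r)).filter
            (fun X : ℕ => (p : ℤ) ^ r ∣ ((0 : ℕ) : ℤ) * (X : ℤ) + a i0)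
            = Finset.range (p ^ r) := by
          apply Finset.filter_true_of_mem
          intro X _
          simpa using hA
        rw [hfil, Finset.sum_congr rfl (fun X _ => by rw [mul_comm]),
          eInt_orth (p ^ r) (pow_ne_zero _ hp0) (b i0), if_neg hb']
      · exact ap_empty p hp r r le_rfl 0 (by simp) (a i0) (b i0) hA
    have hsplit : ∑ t ∈ Finset.range (p ^ r), G t
        = G 0 + ∑ s ∈ Finset.range r, (Mf s - Mf (s + 1)) := by
      rw [htel, hM0, hMr]
      ring
    rw [hsplit, hGzero, zero_add]
    -- evaluate each slice
    apply Finset.sum_congr rfl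
    intro s hs
    rw [Finset.mem_range] at hs
    have hdiff : Mf s - Mf (s + 1)
        = ∑ t ∈ (Finset.range (p ^ r)).filter (fun t => p ^ s ∣ t ∧ ¬ p ^ (s + 1) ∣ t), G t := by
      have h1 := Finset.sum_filter_add_sum_filter_not
        ((Finset.range (p ^ r)).filter (fun t => p ^ s ∣ t)) (fun t => p ^ (s + 1) ∣ t) G
      rw [Finset.filter_filter, Finset.filter_filter] at h1
      have h2 : (Finset.range (p ^ r)).filter (fun t => p ^ s ∣ t ∧ p ^ (s + 1) ∣ t)
          = (Finset.range (p ^ r)).filter (fun t => p ^ (s + 1) ∣ t) := by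
        apply Finset.filter_congr
        intro t _
        constructor
        · exact fun h => h.2
        · exact fun h => ⟨(pow_dvd_pow _ (by omega)).trans h, h⟩
      rw [h2] at h1
      have hMfs : Mf s = Mf (s + 1)
          + ∑ t ∈ (Finset.range (p ^ r)).filter (fun t => p ^ s ∣ t ∧ ¬ p ^ (s + 1) ∣ t), G t := by
        simp only [hMf]
        exact h1.symm
      rw [hMfs]
      ring
    rw [hdiff]
    by_cases hsk : s ≤ k
    · -- main case : use slice_eval
      set c : Fin m → ℤ := fun i => a i / (p : ℤ) ^ s with hcdef
      have hc : ∀ i, a i = (p : ℤ) ^ s * c i := by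
        intro i
        exact (Int.mul_ediv_cancel' ((pow_dvd_pow _ hsk).trans (hk1 i).1)).symm
      have hb : ∀ i, (p : ℤ) ^ s ∣ b i := fun i => (pow_dvd_pow _ hsk).trans (hk1 i).2
      have h2s : (p : ℤ) ^ (2 * s) ∣ (∑ i, a i * b i) :=
        (pow_dvd_pow _ (by omega : 2 * s ≤ 2 * k + k')).trans hQ1
      obtain ⟨n, hQn⟩ := h2s
      have hps0 : ((p : ℤ) ^ s) ≠ 0 := pow_ne_zero _ (by exact_mod_cast hp0)
      have hn : (∑ i, c i * b i) = (p : ℤ) ^ s * n := by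
        apply mul_left_cancel₀ hps0
        have h3 : (p : ℤ) ^ s * (∑ i, c i * b i) = ∑ i, a i * b i := by
          rw [Finset.mul_sum]
          apply Finset.sum_congr rfl
          intro i _
          rw [hc i]
          ring
        rw [h3, hQn]
        ring
      rw [slice_eval p hp r s hs m a b c hc hb n hn]
      -- identify the divisibility conditions
      have hiff1 : ((p : ℤ) ^ (r - s) ∣ n) ↔ s ≤ J := by
        constructor
        · intro ⟨n', hn'⟩
          by_contra hgt
          apply hQ2
          refine (pow_dvd_pow _ (by omega : 2 * k + k' + 1 ≤ r + s)).trans ⟨n', ?_⟩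
          rw [hQn, hn', show r + s = 2 * s + (r - s) by omega, pow_add]
          ring
        · intro hsJ
          have h4 : (p : ℤ) ^ (r + s) ∣ (∑ i, a i * b i) :=
            (pow_dvd_pow _ (by omega : r + s ≤ 2 * k + k')).trans hQ1
          rw [hQn, show r + s = 2 * s + (r - s) by omega, pow_add] at h4
          exact (mul_dvd_mul_iff_left (pow_ne_zero (2*s) (by exact_mod_cast hp0 : (p:ℤ) ≠ 0))).mp h4
      have hiff2 : ((p : ℤ) ^ (r - s - 1) ∣ n) ↔ s ≤ J + 1 := by
        constructor
        · intro ⟨n', hn'⟩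
          by_contra hgt
          apply hQ2
          refine (pow_dvd_pow _ (by omega : 2 * k + k' + 1 ≤ r + s - 1)).trans ⟨n', ?_⟩
          rw [hQn, hn', show r + s - 1 = 2 * s + (r - s - 1) by omega, pow_add]
          ring
        · intro hsJ
          have h4 : (p : ℤ) ^ (r + s - 1) ∣ (∑ i, a i * b i) :=
            (pow_dvd_pow _ (by omega : r + s - 1 ≤ 2 * k + k')).trans hQ1
          rw [hQn, show r + s - 1 = 2 * s + (r - s - 1) by omega, pow_add] at h4
          exact (mul_dvd_mul_iff_left (pow_ne_zero (2*s) (by exact_mod_cast hp0 : (p:ℤ) ≠ 0))).mp h4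
      rw [if_congr hiff1 rfl rfl, if_congr hiff2 rfl rfl]
      simp only [hV]
      rw [mul_sub, mul_ite, mul_ite]
      simp only [mul_zero]
    · -- vanishing case : s > k
      push_neg at hsk
      have hvanish : ∀ t ∈ (Finset.range (p ^ r)).filter
          (fun t => p ^ s ∣ t ∧ ¬ p ^ (s + 1) ∣ t), G t = 0 := by
        intro t ht
        simp only [Finset.mem_filter, Finset.mem_range] at ht
        obtain ⟨hlt, htd, htd2⟩ := ht
        simp only [hG]
        apply Finset.prod_eq_zero (Finset.mem_univ i0)
        set w : ℕ := t / p ^ s with hwdef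
        have hts : p ^ s * w = t := Nat.mul_div_cancel' htd
        have hw : ¬ p ∣ w := by
          intro ⟨y, hy⟩
          exact htd2 ⟨y, by rw [← hts, hy]; ring⟩
        have ht' : (t : ℤ) = (p : ℤ) ^ s * (w : ℤ) := by exact_mod_cast hts.symm
        by_cases hA : (p : ℤ) ^ s ∣ a i0
        · have hw' : ((p : ℤ) ^ (r - s)) ∣ (w : ℤ) * (invmod (p ^ (r - s)) w : ℤ) - 1 :=
            invmod_inverse p hp (r - s) w (by omega) hw
          have hc0 : a i0 = (p : ℤ) ^ s * (a i0 / (p : ℤ) ^ s) := (Int.mul_ediv_cancel' hA).symm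
          rw [ap_eval p hp s r hs t w hw ht' _ hw' (a i0) (b i0) _ hc0]
          rw [if_neg]
          intro hB
          apply hi0
          constructor
          · exact (pow_dvd_pow _ (by omega : k + 1 ≤ s)).trans hA
          · exact (pow_dvd_pow _ (by omega : k + 1 ≤ s)).trans hB
        · exact ap_empty p hp s r hs.le t ⟨w, ht'⟩ (a i0) (b i0) hA
      rw [Finset.sum_congr rfl hvanish, Finset.sum_const_zero]
      simp only [hV]
      have h5 : ¬ s ≤ J := by omega
      have h6 : ¬ s ≤ J + 1 := by omega
      rw [if_neg h5, if_neg h6, sub_zero]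
  rw [hkey]
  -- step 3 : final arithmetic
  simp only [hV]
  rw [Finset.sum_sub_distrib]
  have hfil1 : ∀ (cJ : ℕ), cJ + 1 ≤ r → ∀ f : ℕ → ℂ,
      (∑ s ∈ Finset.range r, if s ≤ cJ then f s else 0) = ∑ s ∈ Finset.range (cJ + 1), f s := by
    intro cJ hcJ f
    rw [← Finset.sum_filter]
    apply Finset.sum_congr _ (fun s _ => rfl)
    ext x
    simp only [Finset.mem_filter, Finset.mem_range]
    omega
  rw [hfil1 J (by omega), hfil1 (J + 1) (by omega)]
  rw [Finset.sum_range_succ (fun j => (p : ℂ) ^ (j * m) * (p : ℂ) ^ (r - j - 1)) (J + 1)]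
  rw [mul_sub, mul_add, Finset.mul_sum, Finset.mul_sum, sub_add_eq_sub_sub, ← Finset.sum_sub_distrib]
  have hzpow : ∀ (u : ℕ) (E : ℤ), E = (u : ℤ) → (p : ℂ) ^ E = (p : ℂ) ^ u := by
    intro u E h
    rw [h, zpow_natCast]
  have hterm : ∀ j ∈ Finset.range (J + 1),
      ((p : ℂ) ^ (r * (m - 1)) * ((p : ℂ) ^ (j * m) * (p : ℂ) ^ (r - j))
        - (p : ℂ) ^ (r * (m - 1)) * ((p : ℂ) ^ (j * m) * (p : ℂ) ^ (r - j - 1)))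
      = ((p : ℂ) ^ ((r : ℤ) * (m : ℤ) + (j : ℤ) * ((m : ℤ) - 1)) -
          (p : ℂ) ^ ((r : ℤ) * (m : ℤ) + (j : ℤ) * ((m : ℤ) - 1) - 1)) := by
    intro j hj
    rw [Finset.mem_range] at hj
    have hjr : j + 1 ≤ r := by omega
    rw [← pow_add, ← pow_add, ← pow_add, ← pow_add]
    congr 1
    · rw [hzpow (r * (m - 1) + (j * m + (r - j)))]
      rw [Nat.cast_add, Nat.cast_add, Nat.cast_mul, Nat.cast_mul,
        Nat.cast_sub (by omega : 1 ≤ m), Nat.cast_sub (by omega : j ≤ r)]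
      push_cast
      ring
    · rw [hzpow (r * (m - 1) + (j * m + (r - j - 1)))]
      rw [Nat.cast_add, Nat.cast_add, Nat.cast_mul, Nat.cast_mul,
        Nat.cast_sub (by omega : 1 ≤ m), Nat.cast_sub (by omega : 1 ≤ r - j),
        Nat.cast_sub (by omega : j ≤ r)]
      push_cast
      ring
  have hlast : (p : ℂ) ^ (r * (m - 1)) * ((p : ℂ) ^ ((J + 1) * m) * (p : ℂ) ^ (r - (J + 1) - 1))
      = (p : ℂ) ^ ((r : ℤ) + (2 * (k : ℤ) + (k' : ℤ)) * ((m : ℤ) - 1) + (m : ℤ) - 2) := by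
    rw [← pow_add, ← pow_add]
    rw [hzpow (r * (m - 1) + ((J + 1) * m + (r - (J + 1) - 1)))]
    have hJrw : (J : ℤ) = 2 * (k : ℤ) + (k' : ℤ) - r := by
      rw [hJdef]
      push_cast [Nat.cast_sub (by omega : r ≤ 2 * k + k')]
      ring
    rw [Nat.cast_add, Nat.cast_add, Nat.cast_mul, Nat.cast_mul,
      Nat.cast_sub (by omega : 1 ≤ m), Nat.cast_sub (by omega : 1 ≤ r - (J + 1)),
      Nat.cast_sub (by omega : J + 1 ≤ r)]
    push_cast
    rw [hJrw]
    ring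
  rw [Finset.sum_congr rfl hterm, hlast]
end

section
/- Let p be an odd prime, η ∈ ℤ^{2m+1}, and r ≥ 1 an integer such that p^r divides every coordinate of η. Then B_r(η) = p^{2rm} + Σ_{0 ≤ j ≤ r−1, r−j even} p^{rm+jm−r} · (p^{r−j} − p^{r−j−1}) · p^{(r+j)/2}. -/
open scoped BigOperators

/-- The exponential sum `B_r(η)` for `η = (a₁,…,a_m,b₁,…,b_m,a₀) ∈ ℤ^{2m+1}`, summing
`e((Σ aᵢvᵢ + Σ bᵢuᵢ + 2a₀u₀)/p^r)` over `(u,v,u₀)` with `Σ uᵢvᵢ + u₀² ≡ 0 (mod p^r)`. -/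
noncomputable def Bodd (p : ℕ) [NeZero p] (m r : ℕ) (a b : Fin m → ℤ) (a0 : ℤ) : ℂ :=
  ∑ w : ((Fin m → ZMod (p ^ r)) × (Fin m → ZMod (p ^ r))) × ZMod (p ^ r),
    if (∑ i, w.1.1 i * w.1.2 i) + w.2 ^ 2 = 0 then
      eZMod (p ^ r)
        ((∑ i, ((a i : ZMod (p ^ r)) * w.1.2 i + (b i : ZMod (p ^ r)) * w.1.1 i)) +
          2 * (a0 : ZMod (p ^ r)) * w.2)
    else 0

/-- The quadratic form `q(η) = a₁b₁ + ⋯ + a_mb_m + a₀²`. -/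
def qodd (m : ℕ) (a b : Fin m → ℤ) (a0 : ℤ) : ℤ :=
  (∑ i, a i * b i) + a0 ^ 2

open scoped Classical

section Aux


variable {p r : ℕ}

lemma dvd_val_iff (hp : p.Prime) {s : ℕ} (hs : s ≤ r) (c : ZMod (p^r)) :
    (p:ZMod (p^r))^s ∣ c ↔ p^s ∣ c.val := by
  haveI : NeZero (p^r) := ⟨pow_ne_zero _ hp.pos.ne'⟩
  have hps : p^s ∣ p^r := pow_dvd_pow _ hs
  constructor
  · rintro ⟨d, rfl⟩
    have h1 : ((p:ZMod (p^r))^s * d) = ((p^s * d.val : ℕ) : ZMod (p^r)) := by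
      push_cast [ZMod.natCast_val, ZMod.cast_id]; ring
    rw [h1, ZMod.val_natCast]
    exact (Nat.dvd_mod_iff hps).mpr ⟨d.val, rfl⟩
  · rintro ⟨t, ht⟩
    refine ⟨(t : ZMod (p^r)), ?_⟩
    have := ZMod.natCast_rightInverse (n := p^r) c
    rw [← this]
    rw [ht]
    push_cast
    ring

variable {p r : ℕ}

lemma card_dvd_val [NeZero (p^r)] (hp : p.Prime) {s : ℕ} (hs : s ≤ r) :
    (Finset.univ.filter fun x : ZMod (p^r) => p^s ∣ x.val).card = p^(r-s) := by

  have hp0 : 0 < p := hp.pos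
  have hps : 0 < p^s := pow_pos hp0 s
  have key : p^s * p^(r-s) = p^r := by
    rw [← pow_add]; congr 1; omega
  rw [← Finset.card_range (p^(r-s))]
  apply Finset.card_bij' (fun x _ => x.val / p^s)
      (fun y _ => ((p^s * y : ℕ) : ZMod (p^r)))
  · intro x hx
    simp only [Finset.mem_filter, Finset.mem_univ, true_and] at hx
    simp only [Finset.mem_range]
    have := ZMod.val_lt x
    rw [Nat.div_lt_iff_lt_mul hps]
    calc x.val < p^r := this
    _ = p^(r-s) * p^s := by rw [mul_comm]; exact key.symm
  · intro y hy
    simp only [Finset.mem_range] at hy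
    simp only [Finset.mem_filter, Finset.mem_univ, true_and]
    rw [ZMod.val_natCast_of_lt]
    · exact ⟨y, rfl⟩
    · calc p^s * y < p^s * p^(r-s) := (Nat.mul_lt_mul_left hps).mpr hy
      _ = p^r := key
  · intro x hx
    simp only [Finset.mem_filter, Finset.mem_univ, true_and] at hx
    rw [Nat.mul_div_cancel' hx]
    exact ZMod.natCast_rightInverse x
  · intro y hy
    simp only [Finset.mem_range] at hy
    have hlt : p^s * y < p^r := by
      calc p^s * y < p^s * p^(r-s) := (Nat.mul_lt_mul_left hps).mpr hy
      _ = p^r := key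
    rw [ZMod.val_natCast_of_lt hlt, Nat.mul_div_cancel_left _ hps]

variable {p r : ℕ}

lemma card_pmul_fiber [NeZero (p^r)] (hp : p.Prime) {j : ℕ} (hj : j ≤ r) (c : ZMod (p^r)) :
    (Finset.univ.filter fun y : ZMod (p^r) => (p:ZMod (p^r))^j * y = c).card
    = if (p:ZMod (p^r))^j ∣ c then p^j else 0 := by
  classical
  split_ifs with h
  · obtain ⟨d, rfl⟩ := h
    -- biject with kernel
    have hbij : (Finset.univ.filter fun y : ZMod (p^r) => (p:ZMod (p^r))^j * y = (p:ZMod (p^r))^j * d).card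
        = (Finset.univ.filter fun z : ZMod (p^r) => (p:ZMod (p^r))^j * z = 0).card := by
      apply Finset.card_bij' (fun y _ => y - d) (fun z _ => z + d)
      · intro y hy
        simp only [Finset.mem_filter, Finset.mem_univ, true_and] at hy ⊢
        rw [mul_sub, hy, sub_self]
      · intro z hz
        simp only [Finset.mem_filter, Finset.mem_univ, true_and] at hz ⊢
        rw [mul_add, hz, zero_add]
      · intro y _; ring
      · intro z _; ring
    rw [hbij]
    -- kernel condition ↔ p^(r-j) ∣ y.val
    have hker : ∀ z : ZMod (p^r), ((p:ZMod (p^r))^j * z = 0) ↔ p^(r-j) ∣ z.val := by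
      intro z
      have h1 : (p:ZMod (p^r))^j * z = ((p^j * z.val : ℕ) : ZMod (p^r)) := by
        push_cast [ZMod.natCast_val, ZMod.cast_id]; ring
      rw [h1, ZMod.natCast_eq_zero_iff]
      constructor
      · rintro ⟨t, ht⟩
        refine ⟨t, ?_⟩
        have hkey : p^r = p^j * p^(r-j) := by rw [← pow_add]; congr 1; omega
        have hpj : 0 < p^j := pow_pos hp.pos j
        have : p^j * z.val = p^j * (p^(r-j) * t) := by rw [ht, hkey]; ring
        exact Nat.eq_of_mul_eq_mul_left hpj this
      · rintro ⟨t, ht⟩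
        refine ⟨t, ?_⟩
        rw [ht, ← mul_assoc, ← pow_add]
        congr 2
        omega
    rw [Finset.filter_congr (fun z _ => by rw [hker z])]
    rw [card_dvd_val hp (Nat.sub_le r j)]
    congr 1; omega
  · rw [Finset.card_eq_zero, Finset.filter_eq_empty_iff]
    intro y _
    exact fun hy => h ⟨y, hy.symm⟩

lemma exists_unit_factor [NeZero (p^r)] (hp : p.Prime) (hr : 1 ≤ r) {j : ℕ}
    {v : ZMod (p^r)} (h1 : (p:ZMod (p^r))^j ∣ v) (h2 : ¬ (p:ZMod (p^r))^(j+1) ∣ v) :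
    ∃ e : ZMod (p^r), IsUnit e ∧ v = (p:ZMod (p^r))^j * e := by
  obtain ⟨y, rfl⟩ := h1
  refine ⟨y, ?_, rfl⟩
  by_contra hy
  apply h2
  have hyv : ((y.val : ℕ) : ZMod (p^r)) = y := ZMod.natCast_rightInverse y
  have hcop : ¬ Nat.Coprime y.val (p^r) := by
    intro hc
    exact hy (by rw [← hyv]; exact (ZMod.isUnit_iff_coprime _ _).mpr hc)
  have hpd : p ∣ y.val := by
    by_contra hpd
    exact hcop (Nat.Coprime.pow_right _ ((Nat.coprime_comm).mp (hp.coprime_iff_not_dvd.mpr hpd)))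
  obtain ⟨t, ht⟩ := hpd
  refine ⟨(t : ZMod (p^r)), ?_⟩
  rw [← hyv, ht]
  push_cast
  ring

variable {p r : ℕ}

lemma card_mul_unit [NeZero (p^r)] (hp : p.Prime) {j : ℕ} (hj : j ≤ r)
    {e : ZMod (p^r)} (he : IsUnit e) (c : ZMod (p^r)) :
    (Finset.univ.filter fun x : ZMod (p^r) => x * ((p:ZMod (p^r))^j * e) = c).card
    = if (p:ZMod (p^r))^j ∣ c then p^j else 0 := by
  rw [← card_pmul_fiber hp hj c]
  apply Finset.card_bij' (fun x _ => e * x) (fun y _ => ↑he.unit⁻¹ * y)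
  · intro x hx
    simp only [Finset.mem_filter, Finset.mem_univ, true_and] at hx ⊢
    rw [← hx]; ring
  · intro y hy
    simp only [Finset.mem_filter, Finset.mem_univ, true_and] at hy ⊢
    rw [← hy]
    have h1 : e * ↑he.unit⁻¹ = 1 := he.mul_val_inv
    calc ↑he.unit⁻¹ * y * (↑p ^ j * e) = (e * ↑he.unit⁻¹) * (↑p^j * y) := by ring
    _ = ↑p^j * y := by rw [h1, one_mul]
  · intro x _
    have h1 : ↑he.unit⁻¹ * e = 1 := he.val_inv_mul
    calc ↑he.unit⁻¹ * (e * x) = (↑he.unit⁻¹ * e) * x := by ring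
    _ = x := by rw [h1, one_mul]
  · intro y _
    have h1 : e * ↑he.unit⁻¹ = 1 := he.mul_val_inv
    calc e * (↑he.unit⁻¹ * y) = (e * ↑he.unit⁻¹) * y := by ring
    _ = y := by rw [h1, one_mul]

lemma nat_pow_dvd_sq_iff (hp : p.Prime) (j : ℕ) (y : ℕ) :
    p^j ∣ y^2 ↔ p^((j+1)/2) ∣ y := by
  rcases eq_or_ne y 0 with rfl | hy
  · simp
  · rw [hp.pow_dvd_iff_le_factorization (pow_ne_zero 2 hy),
      hp.pow_dvd_iff_le_factorization hy, Nat.factorization_pow]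
    simp only [Finsupp.smul_apply, smul_eq_mul]
    omega

lemma pow_dvd_sq_iff [NeZero (p^r)] (hp : p.Prime) {j : ℕ} (hj : j ≤ r) (x : ZMod (p^r)) :
    (p:ZMod (p^r))^j ∣ x^2 ↔ (p:ZMod (p^r))^((j+1)/2) ∣ x := by
  rw [dvd_val_iff hp hj, dvd_val_iff hp (by omega : (j+1)/2 ≤ r)]
  have h1 : x^2 = ((x.val^2 : ℕ) : ZMod (p^r)) := by
    push_cast [ZMod.natCast_val, ZMod.cast_id]
    ring
  rw [h1, ZMod.val_natCast, Nat.dvd_mod_iff (pow_dvd_pow _ hj)]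
  exact nat_pow_dvd_sq_iff hp j x.val

lemma card_pi_dvd [NeZero (p^r)] (hp : p.Prime) {m j : ℕ} (hj : j ≤ r) :
    (Finset.univ.filter fun v : Fin m → ZMod (p^r) => ∀ i, (p:ZMod (p^r))^j ∣ v i).card
    = (p^(r-j))^m := by
  have h1 : (Finset.univ.filter fun v : Fin m → ZMod (p^r) => ∀ i, (p:ZMod (p^r))^j ∣ v i)
      = Fintype.piFinset (fun _ : Fin m => Finset.univ.filter fun x : ZMod (p^r) => (p:ZMod (p^r))^j ∣ x) := by
    ext f
    simp [Fintype.mem_piFinset]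
  rw [h1, Fintype.card_piFinset]
  have h2 : (Finset.univ.filter fun x : ZMod (p^r) => (p:ZMod (p^r))^j ∣ x).card = p^(r-j) := by
    rw [Finset.filter_congr (fun x _ => by rw [dvd_val_iff hp hj])]
    exact card_dvd_val hp hj
  simp [h2]

variable {p r : ℕ}

lemma card_linear_fiber [NeZero (p^r)] (hp : p.Prime) {m : ℕ} {j : ℕ} (hj : j ≤ r)
    (v : Fin m → ZMod (p^r)) (i0 : Fin m) {e : ZMod (p^r)} (he : IsUnit e)
    (hv0 : v i0 = (p:ZMod (p^r))^j * e) (hdvd : ∀ i, (p:ZMod (p^r))^j ∣ v i) (c : ZMod (p^r)) :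
    (Finset.univ.filter fun u : Fin m → ZMod (p^r) => ∑ i, u i * v i = c).card
    = if (p:ZMod (p^r))^j ∣ c then (p^r)^(m-1) * p^j else 0 := by
  classical
  have key : ∀ u : Fin m → ZMod (p^r),
      (∑ i, u i * v i) = u i0 * v i0 + ∑ i : {i : Fin m // i ≠ i0}, u i * v i := by
    intro u
    rw [Fintype.sum_eq_add_sum_compl i0]
    congr 1
    exact Finset.sum_subtype _ (by simp) _
  have hsplit : ∀ w : ZMod (p^r) × ({i : Fin m // i ≠ i0} → ZMod (p^r)),
      (∑ i, ((Equiv.funSplitAt i0 (ZMod (p^r))).symm w) i * v i)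
      = w.1 * v i0 + ∑ i : {i : Fin m // i ≠ i0}, w.2 i * v i := by
    intro w
    rw [key]
    congr 1
    · congr 1
      simp [Equiv.funSplitAt]
    · apply Finset.sum_congr rfl
      intro i _
      congr 1
      simp [Equiv.funSplitAt, i.2]
  rw [Finset.card_filter]
  rw [Fintype.sum_equiv (Equiv.funSplitAt i0 (ZMod (p^r)))
      (fun u : Fin m → ZMod (p^r) => if (∑ i, u i * v i) = c then (1:ℕ) else 0)
      (fun w => if (∑ i, ((Equiv.funSplitAt i0 (ZMod (p^r))).symm w) i * v i) = c then (1:ℕ) else 0)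
      (fun u => by simp only [Equiv.symm_apply_apply])]
  rw [Fintype.sum_prod_type_right]
  have hinner : ∀ w2 : {i : Fin m // i ≠ i0} → ZMod (p^r),
      (∑ x : ZMod (p^r), if (∑ i, ((Equiv.funSplitAt i0 (ZMod (p^r))).symm (x, w2)) i * v i) = c then (1:ℕ) else 0)
      = if (p:ZMod (p^r))^j ∣ c then p^j else 0 := by
    intro w2
    have hg : (p:ZMod (p^r))^j ∣ ∑ i : {i : Fin m // i ≠ i0}, w2 i * v i :=
      Finset.dvd_sum (fun i _ => Dvd.dvd.mul_left (hdvd i) _)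
    have h1 : ∀ x : ZMod (p^r),
        ((∑ i, ((Equiv.funSplitAt i0 (ZMod (p^r))).symm (x, w2)) i * v i) = c)
        ↔ (x * ((p:ZMod (p^r))^j * e) = c - ∑ i : {i : Fin m // i ≠ i0}, w2 i * v i) := by
      intro x
      rw [hsplit (x, w2), hv0]
      constructor
      · intro h; rw [← h]; ring
      · intro h; rw [eq_sub_iff_add_eq] at h; rw [← h]
    simp_rw [h1]
    rw [← Finset.card_filter, card_mul_unit hp hj he]
    congr 1
    exact propext (dvd_sub_left hg)
  simp_rw [hinner]
  rw [Finset.sum_const, smul_eq_mul]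
  have hcard : Fintype.card ({i : Fin m // i ≠ i0} → ZMod (p^r)) = (p^r)^(m-1) := by
    rw [Fintype.card_fun, ZMod.card]
    congr 1
    rw [Fintype.card_subtype_compl, Fintype.card_subtype_eq, Fintype.card_fin]
  rw [Finset.card_univ, hcard]
  split_ifs <;> simp

variable {p r : ℕ}

-- number of x : ZMod (p^r) with p^j ∣ x^2
lemma card_sq_dvd [NeZero (p^r)] (hp : p.Prime) {j : ℕ} (hj : j ≤ r) :
    (Finset.univ.filter fun x : ZMod (p^r) => (p:ZMod (p^r))^j ∣ x^2).card
    = p^(r-(j+1)/2) := by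
  rw [Finset.filter_congr (fun x _ => by
    rw [pow_dvd_sq_iff hp hj, dvd_val_iff hp (by omega : (j+1)/2 ≤ r)])]
  exact card_dvd_val hp (by omega)

theorem main_count [NeZero (p^r)] (hp : p.Prime) (hr : 1 ≤ r) (m : ℕ) (hm : 1 ≤ m) :
    (Finset.univ.filter fun w : ((Fin m → ZMod (p^r)) × (Fin m → ZMod (p^r))) × ZMod (p^r) =>
      (∑ i, w.1.1 i * w.1.2 i) + w.2^2 = 0).card
    = p^(r - (r+1)/2) * (p^r)^m
      + ∑ j ∈ Finset.range r,
          ((p^(r-j))^m - (p^(r-j-1))^m) * ((p^r)^(m-1) * (p^j * p^(r-(j+1)/2))) := by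
  classical
  set R := ZMod (p^r) with hR
  -- inner fiber count as a function of v
  set F : (Fin m → R) → ℕ := fun v =>
    ∑ x : R, (Finset.univ.filter fun u : Fin m → R => ∑ i, u i * v i = -x^2).card with hF
  -- step 1 : the count is ∑ v, F v
  have step1 : (Finset.univ.filter fun w : ((Fin m → R) × (Fin m → R)) × R =>
      (∑ i, w.1.1 i * w.1.2 i) + w.2^2 = 0).card = ∑ v : Fin m → R, F v := by
    rw [Finset.card_filter, Fintype.sum_prod_type, Fintype.sum_prod_type]
    rw [Finset.sum_comm]
    apply Finset.sum_congr rfl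
    intro v _
    simp only [hF]
    rw [Finset.sum_comm]
    apply Finset.sum_congr rfl
    intro x _
    rw [Finset.card_filter]
    apply Finset.sum_congr rfl
    intro u _
    congr 1
    rw [eq_iff_iff]
    constructor
    · intro h; linear_combination h
    · intro h; linear_combination h
  rw [step1]
  -- the filtration
  set D : ℕ → Finset (Fin m → R) := fun j =>
    Finset.univ.filter fun v : Fin m → R => ∀ i, (p:R)^j ∣ v i with hD
  have hD0 : D 0 = Finset.univ := by
    apply Finset.filter_true_of_mem
    intro v _ i
    simp
  have hDsub : ∀ j, D (j+1) ⊆ D j := by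
    intro j v hv
    simp only [hD, Finset.mem_filter, Finset.mem_univ, true_and] at hv ⊢
    intro i
    exact dvd_trans (pow_dvd_pow _ (Nat.le_succ j)) (hv i)
  have hDr : D r = {0} := by
    ext v
    simp only [hD, Finset.mem_filter, Finset.mem_univ, true_and, Finset.mem_singleton]
    have hz : (p:R)^r = 0 := by
      have : ((p^r : ℕ) : R) = 0 := ZMod.natCast_self _
      push_cast at this
      exact this
    rw [hz]
    constructor
    · intro h; funext i; exact zero_dvd_iff.mp (h i)
    · intro h i; rw [h]; simp
  -- telescoping
  have tele : ∀ k, k ≤ r → ∑ v : Fin m → R, F v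
      = ∑ j ∈ Finset.range k, ∑ v ∈ D j \ D (j+1), F v + ∑ v ∈ D k, F v := by
    intro k
    induction k with
    | zero => intro _; simp [hD0]
    | succ n ih =>
      intro hn
      rw [ih (by omega), Finset.sum_range_succ]
      have := Finset.sum_sdiff (f := F) (hDsub n)
      omega
  rw [tele r le_rfl, hDr]
  -- value of F on D j \ D (j+1)
  have hEval : ∀ j, j < r → ∀ v ∈ D j \ D (j+1),
      F v = (p^r)^(m-1) * (p^j * p^(r-(j+1)/2)) := by
    intro j hj v hv
    simp only [Finset.mem_sdiff, hD, Finset.mem_filter, Finset.mem_univ, true_and] at hv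
    obtain ⟨hv1, hv2⟩ := hv
    push_neg at hv2
    obtain ⟨i0, hi0⟩ := hv2
    obtain ⟨e, he, hve⟩ := exists_unit_factor hp hr (hv1 i0) hi0
    simp only [hF]
    have : ∀ x : R, (Finset.univ.filter fun u : Fin m → R => ∑ i, u i * v i = -x^2).card
        = if (p:R)^j ∣ x^2 then (p^r)^(m-1) * p^j else 0 := by
      intro x
      rw [card_linear_fiber hp (le_of_lt hj) v i0 he hve hv1 (-x^2)]
      congr 1
      rw [eq_iff_iff, dvd_neg]
    simp_rw [this]
    rw [← Finset.sum_filter, Finset.sum_const, smul_eq_mul,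
      card_sq_dvd hp (le_of_lt hj)]
    ring
  -- value of F at 0
  have hF0 : F 0 = p^(r - (r+1)/2) * (p^r)^m := by
    simp only [hF]
    have : ∀ x : R, (Finset.univ.filter fun u : Fin m → R => ∑ i, u i * (0 : Fin m → R) i = -x^2).card
        = if (p:R)^r ∣ x^2 then (p^r)^m else 0 := by
      intro x
      have hz : (p:R)^r = 0 := by
        have : ((p^r : ℕ) : R) = 0 := ZMod.natCast_self _
        push_cast at this
        exact this
      have hsum : ∀ u : Fin m → R, (∑ i, u i * (0 : Fin m → R) i) = 0 := by
        intro u; simp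
      by_cases hx : x^2 = 0
      · rw [if_pos (by rw [hz]; exact (zero_dvd_iff).mpr hx)]
        rw [Finset.filter_true_of_mem (fun u _ => by rw [hsum u, hx, neg_zero])]
        rw [Finset.card_univ, Fintype.card_fun, ZMod.card, Fintype.card_fin]
      · rw [if_neg (by rw [hz, zero_dvd_iff]; exact hx)]
        rw [Finset.card_eq_zero, Finset.filter_eq_empty_iff]
        intro u _ h
        rw [hsum u] at h
        exact hx (by rw [← neg_eq_zero, ← h])
    simp_rw [this]
    rw [← Finset.sum_filter, Finset.sum_const, smul_eq_mul, card_sq_dvd hp le_rfl]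
  rw [Finset.sum_singleton, hF0]
  rw [add_comm]
  congr 1
  apply Finset.sum_congr rfl
  intro j hj
  rw [Finset.mem_range] at hj
  rw [Finset.sum_congr rfl (hEval j hj), Finset.sum_const, smul_eq_mul]
  congr 1
  rw [Finset.card_sdiff_of_subset (hDsub j)]
  simp only [hD]
  rw [card_pi_dvd hp (le_of_lt hj), card_pi_dvd hp (by omega : j+1 ≤ r)]
  congr 3

noncomputable def fterm (p m r j : ℕ) : ℂ :=
  (((p:ℂ)^(r-j))^m - ((p:ℂ)^(r-j-1))^m) * (((p:ℂ)^r)^(m-1) * ((p:ℂ)^j * (p:ℂ)^(r-(j+1)/2)))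

noncomputable def gterm (p m r j : ℕ) : ℂ :=
  (p:ℂ)^((r:ℤ)*(m:ℤ) + (j:ℤ)*(m:ℤ) - (r:ℤ))
  * ((p:ℂ)^((r:ℤ)-(j:ℤ)) - (p:ℂ)^((r:ℤ)-(j:ℤ)-1))
  * (p:ℂ)^(((r:ℤ)+(j:ℤ))/2)

noncomputable def hterm (p m r : ℕ) : ℂ := (p:ℂ)^(r-(r+1)/2) * ((p:ℂ)^r)^m

noncomputable def LHSa (p m r : ℕ) : ℂ := hterm p m r + ∑ j ∈ Finset.range r, fterm p m r j

noncomputable def RHSa (p m r : ℕ) : ℂ :=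
  (p:ℂ)^(2*r*m) + ∑ j ∈ (Finset.range r).filter (fun j => (r-j)%2=0), gterm p m r j

lemma fterm_eq (p m r j : ℕ) :
    fterm p m r j
    = (p:ℂ)^((r-j)*m + (r*(m-1) + (j + (r-(j+1)/2))))
      - (p:ℂ)^((r-j-1)*m + (r*(m-1) + (j + (r-(j+1)/2)))) := by
  unfold fterm; ring

lemma hterm_eq (p m r : ℕ) : hterm p m r = (p:ℂ)^((r-(r+1)/2) + r*m) := by
  unfold hterm; ring

lemma gterm_eq (p m r j : ℕ) (hm : 1 ≤ m) (hj : j < r) :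
    gterm p m r j
    = (p:ℂ)^(r*m+j*m-r + ((r-j) + (r+j)/2))
      - (p:ℂ)^(r*m+j*m-r + ((r-j-1) + (r+j)/2)) := by
  unfold gterm
  have hrm : r ≤ r*m := Nat.le_mul_of_pos_right r (by omega)
  have e1 : ((r*m+j*m-r : ℕ) : ℤ) = (r:ℤ)*(m:ℤ) + (j:ℤ)*(m:ℤ) - (r:ℤ) := by
    rw [Nat.cast_sub (le_trans hrm (Nat.le_add_right _ _))]
    push_cast; ring
  have e2 : ((r-j : ℕ) : ℤ) = (r:ℤ)-(j:ℤ) := by omega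
  have e3 : ((r-j-1 : ℕ) : ℤ) = (r:ℤ)-(j:ℤ)-1 := by omega
  have e4 : (((r+j)/2 : ℕ) : ℤ) = ((r:ℤ)+(j:ℤ))/2 := by omega
  rw [← e1, ← e3, ← e2, ← e4, zpow_natCast, zpow_natCast, zpow_natCast, zpow_natCast]
  ring

lemma fterm_step (p : ℕ) {m : ℕ} (hm : 1 ≤ m) {s j : ℕ} (hj : j < s) :
    fterm p m (s+2) (j+2) = (p:ℂ)^(2*m+1) * fterm p m s j := by
  rw [fterm_eq, fterm_eq, mul_sub, ← pow_add, ← pow_add]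
  have ha : s ≤ s*m := Nat.le_mul_of_pos_right s (by omega)
  have hb : j*m ≤ s*m := Nat.mul_le_mul_right m (by omega)
  have E1 : (s+2-(j+2))*m + ((s+2)*(m-1) + ((j+2) + (s+2-((j+2)+1)/2)))
      = 2*m+1 + ((s-j)*m + (s*(m-1) + (j + (s-(j+1)/2)))) := by
    simp only [Nat.add_mul, Nat.sub_mul, Nat.mul_sub, Nat.mul_one, mul_assoc]
    omega
  have E2 : (s+2-(j+2)-1)*m + ((s+2)*(m-1) + ((j+2) + (s+2-((j+2)+1)/2)))
      = 2*m+1 + ((s-j-1)*m + (s*(m-1) + (j + (s-(j+1)/2)))) := by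
    simp only [Nat.add_mul, Nat.sub_mul, Nat.mul_sub, Nat.mul_one, mul_assoc]
    omega
  rw [E1, E2]

lemma gterm_step (p : ℕ) {m : ℕ} (hm : 1 ≤ m) {s j : ℕ} (hj : j < s) :
    gterm p m (s+2) j = (p:ℂ)^(2*m+1) * gterm p m s j := by
  rw [gterm_eq p m (s+2) j hm (by omega), gterm_eq p m s j hm hj, mul_sub, ← pow_add, ← pow_add]
  have ha : s ≤ s*m := Nat.le_mul_of_pos_right s (by omega)
  have hb : j*m ≤ s*m := Nat.mul_le_mul_right m (by omega)
  have hc : j ≤ j*m := Nat.le_mul_of_pos_right j (by omega)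
  have E1 : (s+2)*m+j*m-(s+2) + ((s+2-j) + ((s+2)+j)/2)
      = 2*m+1 + (s*m+j*m-s + ((s-j) + (s+j)/2)) := by
    simp only [Nat.add_mul, Nat.sub_mul, Nat.mul_sub, Nat.mul_one, mul_assoc]
    omega
  have E2 : (s+2)*m+j*m-(s+2) + ((s+2-j-1) + ((s+2)+j)/2)
      = 2*m+1 + (s*m+j*m-s + ((s-j-1) + (s+j)/2)) := by
    simp only [Nat.add_mul, Nat.sub_mul, Nat.mul_sub, Nat.mul_one, mul_assoc]
    omega
  rw [E1, E2]

lemma hterm_step (p : ℕ) {m : ℕ} (hm : 1 ≤ m) (s : ℕ) :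
    hterm p m (s+2) = (p:ℂ)^(2*m+1) * hterm p m s := by
  rw [hterm_eq, hterm_eq, ← pow_add]
  have ha : s ≤ s*m := Nat.le_mul_of_pos_right s (by omega)
  have E : (s+2-((s+2)+1)/2) + (s+2)*m = 2*m+1 + ((s-(s+1)/2) + s*m) := by
    simp only [Nat.add_mul, mul_assoc]
    omega
  rw [E]

lemma fterm_boundary (p : ℕ) {m : ℕ} (hm : 1 ≤ m) (s : ℕ) :
    fterm p m (s+2) 0 + fterm p m (s+2) 1 = (p:ℂ)^(2*((s+2)*m)) - (p:ℂ)^(2*((s+1)*m)) := by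
  obtain ⟨m', rfl⟩ : ∃ m', m = m'+1 := ⟨m-1, by omega⟩
  rw [fterm_eq, fterm_eq]
  have E1 : (s+2-0)*(m'+1) + ((s+2)*(m'+1-1) + (0 + (s+2-(0+1)/2))) = 2*((s+2)*(m'+1)) := by
    norm_num
    zify
    ring
  have E2 : (s+2-0-1)*(m'+1) + ((s+2)*(m'+1-1) + (0 + (s+2-(0+1)/2)))
      = (s+1)*(m'+1) + ((s+2)*(m'+1-1) + (0 + (s+2-(0+1)/2))) := by
    norm_num
  have E3 : (s+2-1)*(m'+1) + ((s+2)*(m'+1-1) + (1 + (s+2-(1+1)/2)))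
      = (s+1)*(m'+1) + ((s+2)*(m'+1-1) + (0 + (s+2-(0+1)/2))) := by
    norm_num
    zify [show (1:ℕ) ≤ s+2 by omega, show (1:ℕ) ≤ s+2-1 by omega]
    ring
  have E4 : (s+2-1-1)*(m'+1) + ((s+2)*(m'+1-1) + (1 + (s+2-(1+1)/2))) = 2*((s+1)*(m'+1)) := by
    norm_num
    zify [show (1:ℕ) ≤ s+2 by omega, show (1:ℕ) ≤ s+2-1 by omega]
    ring
  rw [E1, E2, E3, E4]
  ring

lemma gterm_boundary (p : ℕ) {m : ℕ} (hm : 1 ≤ m) (s : ℕ) :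
    gterm p m (s+2) s = (p:ℂ)^(2*((s+1)*m)+1) - (p:ℂ)^(2*((s+1)*m)) := by
  obtain ⟨m', rfl⟩ : ∃ m', m = m'+1 := ⟨m-1, by omega⟩
  rw [gterm_eq p (m'+1) (s+2) s hm (by omega)]
  have E1 : (s+2)*(m'+1)+s*(m'+1)-(s+2) + ((s+2-s) + ((s+2)+s)/2) = 2*((s+1)*(m'+1))+1 := by
    have h1 : (s+2-s) = 2 := by omega
    have h2 : ((s+2)+s)/2 = s+1 := by omega
    rw [h1, h2]
    zify [show s+2 ≤ (s+2)*(m'+1)+s*(m'+1) by nlinarith]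
    ring
  have E2 : (s+2)*(m'+1)+s*(m'+1)-(s+2) + ((s+2-s-1) + ((s+2)+s)/2) = 2*((s+1)*(m'+1)) := by
    have h1 : (s+2-s-1) = 1 := by omega
    have h2 : ((s+2)+s)/2 = s+1 := by omega
    rw [h1, h2]
    zify [show s+2 ≤ (s+2)*(m'+1)+s*(m'+1) by nlinarith]
    ring
  rw [E1, E2]

lemma LHSa_step (p : ℕ) {m : ℕ} (hm : 1 ≤ m) (s : ℕ) :
    LHSa p m (s+2) = (p:ℂ)^(2*m+1) * LHSa p m s
      + ((p:ℂ)^(2*((s+2)*m)) - (p:ℂ)^(2*((s+1)*m))) := by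
  unfold LHSa
  rw [Finset.sum_range_succ', Finset.sum_range_succ']
  have hshift : ∀ j ∈ Finset.range s, fterm p m (s+2) (j+1+1) = (p:ℂ)^(2*m+1) * fterm p m s j := by
    intro j hj
    rw [Finset.mem_range] at hj
    exact fterm_step p hm hj
  rw [Finset.sum_congr rfl hshift, ← Finset.mul_sum, hterm_step p hm s]
  have hb := fterm_boundary p hm s
  have h01 : fterm p m (s+2) (0+1) = fterm p m (s+2) 1 := by norm_num
  rw [h01]
  calc (p:ℂ)^(2*m+1) * hterm p m s
        + ((p:ℂ)^(2*m+1) * ∑ j ∈ Finset.range s, fterm p m s j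
          + fterm p m (s+2) 1 + fterm p m (s+2) 0)
      = (p:ℂ)^(2*m+1) * (hterm p m s + ∑ j ∈ Finset.range s, fterm p m s j)
        + (fterm p m (s+2) 0 + fterm p m (s+2) 1) := by ring
    _ = _ := by rw [hb]

lemma RHSa_step (p : ℕ) {m : ℕ} (hm : 1 ≤ m) (s : ℕ) :
    RHSa p m (s+2) = (p:ℂ)^(2*m+1) * RHSa p m s
      + ((p:ℂ)^(2*((s+2)*m)) - (p:ℂ)^(2*((s+1)*m))) := by
  unfold RHSa
  rw [Finset.sum_filter, Finset.sum_filter]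
  rw [Finset.sum_range_succ, Finset.sum_range_succ]
  have hc1 : ¬ ((s+2-(s+1)) % 2 = 0) := by omega
  have hc2 : (s+2-s) % 2 = 0 := by omega
  rw [if_neg hc1, if_pos hc2]
  have hcongr : ∀ j ∈ Finset.range s,
      (if (s+2-j)%2 = 0 then gterm p m (s+2) j else 0)
      = (p:ℂ)^(2*m+1) * (if (s-j)%2 = 0 then gterm p m s j else 0) := by
    intro j hj
    rw [Finset.mem_range] at hj
    have hpar : (s+2-j)%2 = (s-j)%2 := by omega
    rw [hpar, gterm_step p hm hj]
    split_ifs with h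
    · rfl
    · simp
  rw [Finset.sum_congr rfl hcongr, ← Finset.mul_sum, gterm_boundary p hm s]
  calc (p:ℂ)^(2*(s+2)*m)
        + ((p:ℂ)^(2*m+1) * ∑ j ∈ Finset.range s, (if (s-j)%2 = 0 then gterm p m s j else 0)
          + ((p:ℂ)^(2*((s+1)*m)+1) - (p:ℂ)^(2*((s+1)*m))) + 0)
      = (p:ℂ)^(2*m+1) * ((p:ℂ)^(2*s*m)
          + ∑ j ∈ Finset.range s, (if (s-j)%2 = 0 then gterm p m s j else 0))
        + ((p:ℂ)^(2*((s+2)*m)) - (p:ℂ)^(2*((s+1)*m))) := by ring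
    _ = _ := rfl

lemma alg_base1 (p : ℕ) {m : ℕ} (hm : 1 ≤ m) : LHSa p m 1 = RHSa p m 1 := by
  unfold LHSa RHSa
  have hfil : (Finset.range 1).filter (fun j => (1-j)%2=0) = ∅ := by decide
  rw [hfil, Finset.sum_empty, Finset.sum_range_one, hterm_eq, fterm_eq]
  have E0 : (1-(1+1)/2) + 1*m = m := by omega
  have E1 : (1-0)*m + (1*(m-1) + (0 + (1-(0+1)/2))) = 2*m := by omega
  have E2 : (1-0-1)*m + (1*(m-1) + (0 + (1-(0+1)/2))) = m := by omega
  rw [E0, E1, E2]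
  ring

lemma alg_base2 (p : ℕ) {m : ℕ} (hm : 1 ≤ m) : LHSa p m 2 = RHSa p m 2 := by
  unfold LHSa RHSa
  have hfil : (Finset.range 2).filter (fun j => (2-j)%2=0) = {0} := by decide
  rw [hfil, Finset.sum_singleton, Finset.sum_range_succ, Finset.sum_range_one,
    hterm_eq, fterm_eq, fterm_eq, gterm_eq p m 2 0 hm (by omega)]
  have E0 : (2-(2+1)/2) + 2*m = 2*m+1 := by omega
  have E1 : (2-0)*m + (2*(m-1) + (0 + (2-(0+1)/2))) = 4*m := by omega
  have E2 : (2-0-1)*m + (2*(m-1) + (0 + (2-(0+1)/2))) = 3*m := by omega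
  have E3 : (2-1)*m + (2*(m-1) + (1 + (2-(1+1)/2))) = 3*m := by omega
  have E4 : (2-1-1)*m + (2*(m-1) + (1 + (2-(1+1)/2))) = 2*m := by omega
  have E5 : 2*m+0*m-2 + ((2-0) + (2+0)/2) = 2*m+1 := by omega
  have E6 : 2*m+0*m-2 + ((2-0-1) + (2+0)/2) = 2*m := by omega
  simp only [E0, E1, E2, E3, E4, E5, E6]
  ring

lemma alg_id (p m : ℕ) (hm : 1 ≤ m) (r : ℕ) (hr : 1 ≤ r) : LHSa p m r = RHSa p m r := by
  induction r using Nat.strong_induction_on with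
  | _ r IH =>
    match r, hr with
    | 1, _ => exact alg_base1 p hm
    | 2, _ => exact alg_base2 p hm
    | (s+3), _ =>
      have ih := IH (s+1) (by omega) (by omega)
      have h1 : LHSa p m (s+3) = (p:ℂ)^(2*m+1) * LHSa p m (s+1)
          + ((p:ℂ)^(2*((s+3)*m)) - (p:ℂ)^(2*((s+2)*m))) := LHSa_step p hm (s+1)
      have h2 : RHSa p m (s+3) = (p:ℂ)^(2*m+1) * RHSa p m (s+1)
          + ((p:ℂ)^(2*((s+3)*m)) - (p:ℂ)^(2*((s+2)*m))) := RHSa_step p hm (s+1)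
      rw [h1, h2, ih]

lemma Bodd_eq_card (p : ℕ) (hp : p.Prime) [NeZero p] (m r : ℕ) (a b : Fin m → ℤ) (a0 : ℤ)
    (hdvd : (∀ i, (p : ℤ) ^ r ∣ a i ∧ (p : ℤ) ^ r ∣ b i) ∧ (p : ℤ) ^ r ∣ a0) :
    Bodd p m r a b a0
    = ((Finset.univ.filter fun w : ((Fin m → ZMod (p^r)) × (Fin m → ZMod (p^r))) × ZMod (p^r) =>
        (∑ i, w.1.1 i * w.1.2 i) + w.2^2 = 0).card : ℂ) := by
  haveI : NeZero (p^r) := ⟨pow_ne_zero _ hp.pos.ne'⟩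
  have ha : ∀ i, ((a i : ZMod (p^r)) : ZMod (p^r)) = 0 := by
    intro i
    rw [ZMod.intCast_zmod_eq_zero_iff_dvd]
    exact_mod_cast (hdvd.1 i).1
  have hb : ∀ i, ((b i : ZMod (p^r)) : ZMod (p^r)) = 0 := by
    intro i
    rw [ZMod.intCast_zmod_eq_zero_iff_dvd]
    exact_mod_cast (hdvd.1 i).2
  have ha0 : ((a0 : ZMod (p^r)) : ZMod (p^r)) = 0 := by
    rw [ZMod.intCast_zmod_eq_zero_iff_dvd]
    exact_mod_cast hdvd.2
  have he : eZMod (p^r) 0 = 1 := by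
    simp [eZMod]
  rw [Bodd, Finset.card_filter]
  push_cast
  apply Finset.sum_congr rfl
  intro w _
  split_ifs
  · rw [show (∑ i, ((a i : ZMod (p ^ r)) * w.1.2 i + (b i : ZMod (p ^ r)) * w.1.1 i)) +
          2 * (a0 : ZMod (p ^ r)) * w.2 = 0 by
      simp [ha, hb, ha0]]
    exact he
  · rfl

end Aux

theorem Bodd_eval_of_dvd (p : ℕ) (hp : p.Prime) (hp2 : p ≠ 2) [NeZero p]
    (m : ℕ) (hm : 1 ≤ m) (a b : Fin m → ℤ) (a0 : ℤ) (r : ℕ) (hr : 1 ≤ r)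
    (hdvd : (∀ i, (p : ℤ) ^ r ∣ a i ∧ (p : ℤ) ^ r ∣ b i) ∧ (p : ℤ) ^ r ∣ a0) :
    Bodd p m r a b a0 = (p : ℂ) ^ (2 * r * m) +
      ∑ j ∈ (Finset.range r).filter (fun j => (r - j) % 2 = 0),
        (p : ℂ) ^ ((r : ℤ) * (m : ℤ) + (j : ℤ) * (m : ℤ) - (r : ℤ)) *
          ((p : ℂ) ^ ((r : ℤ) - (j : ℤ)) - (p : ℂ) ^ ((r : ℤ) - (j : ℤ) - 1)) *
          (p : ℂ) ^ (((r : ℤ) + (j : ℤ)) / 2) := by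
  haveI : NeZero (p^r) := ⟨pow_ne_zero _ hp.pos.ne'⟩
  rw [Bodd_eq_card p hp m r a b a0 hdvd, main_count hp hr m hm]
  have hcast : ((p^(r - (r+1)/2) * (p^r)^m
      + ∑ j ∈ Finset.range r,
          ((p^(r-j))^m - (p^(r-j-1))^m) * ((p^r)^(m-1) * (p^j * p^(r-(j+1)/2))) : ℕ) : ℂ)
      = LHSa p m r := by
    rw [Nat.cast_add, Nat.cast_mul, Nat.cast_sum]
    unfold LHSa hterm fterm
    congr 1
    · push_cast
      ring
    · apply Finset.sum_congr rfl
      intro j hj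
      rw [Finset.mem_range] at hj
      have hle : (p^(r-j-1))^m ≤ (p^(r-j))^m :=
        Nat.pow_le_pow_left (Nat.pow_le_pow_right hp.one_lt.le (by omega)) m
      rw [Nat.cast_mul, Nat.cast_sub hle]
      push_cast
      ring
  rw [hcast, alg_id p m hm r hr]
  simp only [RHSa, gterm]
end
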